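/- arXiv:2204.09228 — 10 statements merged into one kernel-verified Lean document; each statement's English description precedes it below -/
import Mathlib

section
/- Let Z ⊆ ℝⁿ be a nonempty closed convex set and F : Z → ℝⁿ a monotone operator. Then for every z ∈ Z, the tangent residual dominates the natural residual: r^tan_{(F,Z)}(z) ≥ r^nat_{(F,Z)}(z). -/
open scoped RealInnerProductSpace

/-- The normal cone of the set `Z` at the point `z`:
`N_Z(z) = {v : ⟨v, z' - z⟩ ≤ 0 for all z' ∈ Z}`. -/
def normalCone {E : Type*} [NormedAddCommGroup E] [InnerProductSpace ℝ E]
    (Z : Set E) (z : E) : Set E :=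
  {v | ∀ z' ∈ Z, ⟪v, z' - z⟫ ≤ 0}

/-- The tangent residual of the operator `F` at `z` with respect to `Z`:
`r^tan_{(F,Z)}(z) = inf_{a ∈ N_Z(z)} ‖F z + a‖`. -/
noncomputable def rtan {E : Type*} [NormedAddCommGroup E] [InnerProductSpace ℝ E]
    (F : E → E) (Z : Set E) (z : E) : ℝ :=
  sInf ((fun a => ‖F z + a‖) '' normalCone Z z)

/-- For a nonempty closed convex set `Z ⊆ ℝⁿ` and a monotone operator `F : Z → ℝⁿ`, the
tangent residual dominates the natural residual `r^nat_{(F,Z)}(z) = ‖z - Π_Z(z - F z)‖`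
at every `z ∈ Z`.  Here `proj` is the Euclidean projection onto `Z`, characterized by
its defining property. -/
theorem tangent_residual_dominates_natural_residual {n : ℕ}
    (Z : Set (EuclideanSpace ℝ (Fin n))) (hne : Z.Nonempty) (hcl : IsClosed Z)
    (hconv : Convex ℝ Z)
    (F : EuclideanSpace ℝ (Fin n) → EuclideanSpace ℝ (Fin n))
    (hmono : ∀ z ∈ Z, ∀ z' ∈ Z, 0 ≤ ⟪F z - F z', z - z'⟫)
    (proj : EuclideanSpace ℝ (Fin n) → EuclideanSpace ℝ (Fin n))
    (hprojmem : ∀ x, proj x ∈ Z)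
    (hprojmin : ∀ x, ∀ y ∈ Z, ‖x - proj x‖ ≤ ‖x - y‖)
    (z : EuclideanSpace ℝ (Fin n)) (hz : z ∈ Z) :
    ‖z - proj (z - F z)‖ ≤ rtan F Z z := by
  set u := z - F z with hu
  set w := proj u with hw
  haveI : Nonempty Z := ⟨⟨z, hz⟩⟩
  -- variational inequality for the projection
  have hVI : ∀ y ∈ Z, ⟪u - w, y - w⟫ ≤ 0 := by
    rw [← norm_eq_iInf_iff_real_inner_le_zero hconv (hprojmem u)]
    refine le_antisymm (le_ciInf fun y => hprojmin u y y.2) ?_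
    exact ciInf_le ⟨0, fun _ ⟨_, h⟩ => h ▸ norm_nonneg _⟩ (⟨w, hprojmem u⟩ : Z)
  apply le_csInf
  · exact ⟨‖F z + 0‖, 0, fun z' _ => by simp, rfl⟩
  rintro b ⟨a, ha, rfl⟩
  -- key inequality: ‖z - w‖² ≤ ⟪F z + a, z - w⟫
  have h1 : ⟪u - w, z - w⟫ ≤ 0 := hVI z hz
  have h2 : 0 ≤ ⟪a, z - w⟫ := by
    have := ha w (hprojmem u)
    have : ⟪a, w - z⟫ ≤ 0 := this
    have h3 : (0:ℝ) ≤ -⟪a, w - z⟫ := by linarith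
    calc (0:ℝ) ≤ -⟪a, w - z⟫ := h3
      _ = ⟪a, z - w⟫ := by rw [← inner_neg_right]; congr 1; abel
  have hkey : ‖z - w‖ ^ 2 ≤ ⟪F z + a, z - w⟫ := by
    have huw : u - w = (z - w) - F z := by rw [hu]; abel
    rw [huw, inner_sub_left, sub_nonpos, real_inner_self_eq_norm_sq] at h1
    rw [inner_add_left]
    linarith
  have hcs : ⟪F z + a, z - w⟫ ≤ ‖F z + a‖ * ‖z - w‖ := real_inner_le_norm _ _
  rcases eq_or_lt_of_le (norm_nonneg (z - w)) with h0 | h0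
  · rw [← h0]; exact norm_nonneg _
  · have : ‖z - w‖ * ‖z - w‖ ≤ ‖F z + a‖ * ‖z - w‖ := by
      rw [← sq]; exact hkey.trans hcs
    exact le_of_mul_le_mul_right this h0
end

section
/- Let Z ⊆ ℝⁿ be a nonempty closed convex set, F : Z → ℝⁿ an operator, D > 0, and z ∈ Z. Then the gap function at z is bounded by D times the tangent residual: Gap_{Z,F,D}(z) = sup_{z′ ∈ Z ∩ B(z,D)} ⟨F(z), z − z′⟩ ≤ D · r^tan_{(F,Z)}(z). -/
open scoped RealInnerProductSpace

/-- For a nonempty closed convex set `Z ⊆ ℝⁿ`, an operator `F`, `D > 0` and `z ∈ Z`, the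
gap function `Gap_{Z,F,D}(z) = sup_{z' ∈ Z ∩ B(z,D)} ⟨F z, z - z'⟩` is bounded by
`D · r^tan_{(F,Z)}(z)`. -/
theorem gap_le_D_mul_tangent_residual {n : ℕ}
    (Z : Set (EuclideanSpace ℝ (Fin n))) (hne : Z.Nonempty) (hcl : IsClosed Z)
    (hconv : Convex ℝ Z)
    (F : EuclideanSpace ℝ (Fin n) → EuclideanSpace ℝ (Fin n))
    (D : ℝ) (hD : 0 < D)
    (z : EuclideanSpace ℝ (Fin n)) (hz : z ∈ Z) :
    sSup ((fun z' => ⟪F z, z - z'⟫) '' (Z ∩ Metric.closedBall z D)) ≤ D * rtan F Z z := by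
  have hcone_ne : ((fun a => ‖F z + a‖) '' normalCone Z z).Nonempty := by
    refine ⟨‖F z + 0‖, ⟨0, ?_, rfl⟩⟩
    intro z' hz'
    simp [inner_zero_left]
  have hrtan_nonneg : 0 ≤ rtan F Z z := by
    apply Real.sInf_nonneg
    rintro x ⟨a, _, rfl⟩
    exact norm_nonneg _
  apply Real.sSup_le
  · rintro x ⟨z', ⟨hz'Z, hz'B⟩, rfl⟩
    -- show ⟪F z, z - z'⟫ ≤ D * rtan
    have key : ∀ b ∈ (fun a => ‖F z + a‖) '' normalCone Z z,
        ⟪F z, z - z'⟫ / D ≤ b := by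
      rintro b ⟨a, ha, rfl⟩
      have h1 : ⟪F z, z - z'⟫ ≤ ⟪F z + a, z - z'⟫ := by
        have := ha z' hz'Z
        have h2 : 0 ≤ ⟪a, z - z'⟫ := by
          have : ⟪a, z' - z⟫ = -⟪a, z - z'⟫ := by
            rw [← inner_neg_right]; congr 1; abel
          linarith [ha z' hz'Z, this ▸ ha z' hz'Z]
        rw [inner_add_left]; linarith
      have h3 : ⟪F z + a, z - z'⟫ ≤ ‖F z + a‖ * D := by
        calc ⟪F z + a, z - z'⟫ ≤ ‖F z + a‖ * ‖z - z'‖ := real_inner_le_norm _ _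
          _ ≤ ‖F z + a‖ * D := by
              apply mul_le_mul_of_nonneg_left _ (norm_nonneg _)
              rw [← dist_eq_norm, dist_comm]
              exact Metric.mem_closedBall.mp hz'B
      rw [div_le_iff₀ hD]
      calc ⟪F z, z - z'⟫ ≤ ‖F z + a‖ * D := le_trans h1 h3
        _ = ‖F z + a‖ * D := rfl
    have := le_csInf hcone_ne key
    rw [div_le_iff₀ hD] at this
    calc ⟪F z, z - z'⟫ ≤ rtan F Z z * D := this
      _ = D * rtan F Z z := mul_comm _ _
  · positivity
end

section
/- Let Z ⊆ ℝⁿ be a nonempty closed convex set, F : Z → ℝⁿ a monotone and L-Lipschitz operator, η > 0, and z* ∈ Z a solution of the variational inequality (⟨F(z*), z* − z⟩ ≤ 0 for all z ∈ Z). For any z_k ∈ Z with extragradient iterates z_{k+1/2} = Π_Z(z_k − ηF(z_k)) and z_{k+1} = Π_Z(z_k − ηF(z_{k+1/2})), it holds that ‖z_k − z*‖² ≥ ‖z_{k+1} − z*‖² + (1 − η²L²)‖z_k − z_{k+1/2}‖². -/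
open scoped RealInnerProductSpace

set_option maxHeartbeats 1000000

/-- Key inequality of the extragradient method (Korpelevich): for a monotone `L`-Lipschitz
operator `F` on a nonempty closed convex `Z ⊆ ℝⁿ`, step size `η > 0`, a solution `z*` of the
variational inequality, and EG iterates `z_{k+1/2} = Π_Z(z_k - ηF(z_k))`,
`z_{k+1} = Π_Z(z_k - ηF(z_{k+1/2}))`, one has
`‖z_k - z*‖² ≥ ‖z_{k+1} - z*‖² + (1 - η²L²)‖z_k - z_{k+1/2}‖²`. -/
theorem eg_potential_decrease {n : ℕ}
    (Z : Set (EuclideanSpace ℝ (Fin n))) (hne : Z.Nonempty) (hcl : IsClosed Z)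
    (hconv : Convex ℝ Z)
    (F : EuclideanSpace ℝ (Fin n) → EuclideanSpace ℝ (Fin n)) (L : ℝ)
    (hmono : ∀ z ∈ Z, ∀ z' ∈ Z, 0 ≤ ⟪F z - F z', z - z'⟫)
    (hLip : ∀ z ∈ Z, ∀ z' ∈ Z, ‖F z - F z'‖ ≤ L * ‖z - z'‖)
    (η : ℝ) (hη : 0 < η)
    (proj : EuclideanSpace ℝ (Fin n) → EuclideanSpace ℝ (Fin n))
    (hprojmem : ∀ x, proj x ∈ Z)
    (hprojmin : ∀ x, ∀ y ∈ Z, ‖x - proj x‖ ≤ ‖x - y‖)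
    (zs : EuclideanSpace ℝ (Fin n)) (hzs : zs ∈ Z)
    (hsol : ∀ z ∈ Z, ⟪F zs, zs - z⟫ ≤ 0)
    (zk zhalf znext : EuclideanSpace ℝ (Fin n)) (hzk : zk ∈ Z)
    (hhalf : zhalf = proj (zk - η • F zk))
    (hnext : znext = proj (zk - η • F zhalf)) :
    ‖znext - zs‖ ^ 2 + (1 - η ^ 2 * L ^ 2) * ‖zk - zhalf‖ ^ 2 ≤ ‖zk - zs‖ ^ 2 := by
  -- projection characterization
  have projchar : ∀ x, ∀ y ∈ Z, ⟪x - proj x, y - proj x⟫ ≤ 0 := by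
    intro x
    have hZne : Nonempty Z := ⟨⟨zs, hzs⟩⟩
    have hbdd : BddBelow (Set.range fun w : Z => ‖x - (w : EuclideanSpace ℝ (Fin n))‖) := by
      refine ⟨0, ?_⟩
      rintro r ⟨w, rfl⟩
      positivity
    have heq : ‖x - proj x‖ = ⨅ w : Z, ‖x - (w : EuclideanSpace ℝ (Fin n))‖ := by
      apply le_antisymm
      · exact le_ciInf fun w => hprojmin x w w.2
      · exact ciInf_le hbdd ⟨proj x, hprojmem x⟩
    exact (norm_eq_iInf_iff_real_inner_le_zero hconv (hprojmem x)).mp heq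
  have hhalfmem : zhalf ∈ Z := hhalf ▸ hprojmem _
  have hnextmem : znext ∈ Z := hnext ▸ hprojmem _
  have h1 : ⟪zk - η • F zhalf - znext, zs - znext⟫ ≤ 0 := by
    rw [hnext]; exact projchar _ zs hzs
  have h2 : ⟪zk - η • F zk - zhalf, znext - zhalf⟫ ≤ 0 := by
    rw [hhalf]; exact projchar _ znext hnextmem
  have h3 : 0 ≤ ⟪F zhalf - F zs, zhalf - zs⟫ := hmono zhalf hhalfmem zs hzs
  have h4 : ⟪F zs, zs - zhalf⟫ ≤ 0 := hsol zhalf hhalfmem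
  have h5 : ‖F zhalf - F zk‖ ≤ L * ‖zhalf - zk‖ := hLip zhalf hhalfmem zk hzk
  have h6 : -(‖F zhalf - F zk‖ * ‖znext - zhalf‖) ≤ ⟪F zhalf - F zk, znext - zhalf⟫ := by
    have := abs_real_inner_le_norm (F zhalf - F zk) (znext - zhalf)
    have := neg_abs_le (⟪F zhalf - F zk, znext - zhalf⟫)
    linarith
  -- expansion identities
  have expand : ∀ u v w : EuclideanSpace ℝ (Fin n),
      ‖u - w‖ ^ 2 = ‖u - v‖ ^ 2 + ‖v - w‖ ^ 2 + 2 * ⟪u - v, v - w⟫ := by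
    intro u v w
    have huv : u - w = (u - v) + (v - w) := by abel
    rw [huv, norm_add_sq_real]; ring
  have I1 : ‖zk - zs‖ ^ 2
      = ‖zk - znext‖ ^ 2 + ‖znext - zs‖ ^ 2 + 2 * ⟪zk - znext, znext - zs⟫ :=
    expand zk znext zs
  have I2 : ‖zk - znext‖ ^ 2
      = ‖zk - zhalf‖ ^ 2 + ‖zhalf - znext‖ ^ 2 + 2 * ⟪zk - zhalf, zhalf - znext⟫ :=
    expand zk zhalf znext
  -- linear rewrites of inner products
  have lin1 : ⟪zk - η • F zhalf - znext, zs - znext⟫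
      = -⟪zk - znext, znext - zs⟫ + η * ⟪F zhalf, zhalf - zs⟫
        + η * ⟪F zhalf - F zk, znext - zhalf⟫ + η * ⟪F zk, znext - zhalf⟫ := by
    simp only [inner_sub_left, inner_sub_right, real_inner_smul_left]
    ring
  have lin2 : ⟪zk - η • F zk - zhalf, znext - zhalf⟫
      = -⟪zk - zhalf, zhalf - znext⟫ - η * ⟪F zk, znext - zhalf⟫ := by
    simp only [inner_sub_left, inner_sub_right, real_inner_smul_left]
    ring
  have lin3 : ⟪F zhalf - F zs, zhalf - zs⟫
      = ⟪F zhalf, zhalf - zs⟫ + ⟪F zs, zs - zhalf⟫ := by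
    simp only [inner_sub_left, inner_sub_right]
    ring
  rw [lin1] at h1
  rw [lin2] at h2
  rw [lin3] at h3
  -- norms nonneg and norm_sub_rev
  have ha : ‖zhalf - zk‖ = ‖zk - zhalf‖ := norm_sub_rev _ _
  rw [ha] at h5
  have hb0 : (0:ℝ) ≤ ‖znext - zhalf‖ := norm_nonneg _
  have ha0 : (0:ℝ) ≤ ‖zk - zhalf‖ := norm_nonneg _
  have hm0 : (0:ℝ) ≤ ‖F zhalf - F zk‖ := norm_nonneg _
  have hE : ‖zhalf - znext‖ = ‖znext - zhalf‖ := norm_sub_rev _ _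
  rw [hE] at I2
  -- key scalar step: 2η⟪F zhalf - F zk, znext - zhalf⟫ + ‖znext-zhalf‖² ≥ -η²L²‖zk-zhalf‖²
  have AMGM : -(η ^ 2 * L ^ 2 * ‖zk - zhalf‖ ^ 2)
      ≤ 2 * η * ⟪F zhalf - F zk, znext - zhalf⟫ + ‖znext - zhalf‖ ^ 2 := by
    have hstep : η * (‖F zhalf - F zk‖ * ‖znext - zhalf‖)
        ≤ η * (L * ‖zk - zhalf‖ * ‖znext - zhalf‖) := by
      apply mul_le_mul_of_nonneg_left _ hη.le
      exact mul_le_mul_of_nonneg_right h5 hb0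
    nlinarith [sq_nonneg (‖znext - zhalf‖ - η * L * ‖zk - zhalf‖), h6,
      mul_le_mul_of_nonneg_left h6 hη.le]
  have hr : 0 ≤ ⟪F zhalf, zhalf - zs⟫ := by linarith
  have hr' : 0 ≤ η * ⟪F zhalf, zhalf - zs⟫ := mul_nonneg hη.le hr
  linarith [h1, h2, I1, I2, AMGM, hr']
end

section
/- Let Z ⊆ ℝⁿ be a nonempty closed convex set, F : Z → ℝⁿ an L-Lipschitz operator, and η > 0. For any z_k ∈ Z with extragradient iterates z_{k+1/2} = Π_Z(z_k − ηF(z_k)) and z_{k+1} = Π_Z(z_k − ηF(z_{k+1/2})), the tangent residual at z_{k+1} satisfies r^tan_{(F,Z)}(z_{k+1}) ≤ (1 + ηL + (ηL)²) · ‖z_k − z_{k+1/2}‖ / η. -/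
open scoped RealInnerProductSpace

section Aux

variable {E : Type*} [NormedAddCommGroup E] [InnerProductSpace ℝ E]

lemma proj_variational {Z : Set E} (hne : Z.Nonempty) (hconv : Convex ℝ Z)
    {proj : E → E} (hprojmem : ∀ x, proj x ∈ Z)
    (hprojmin : ∀ x, ∀ y ∈ Z, ‖x - proj x‖ ≤ ‖x - y‖) :
    ∀ x, ∀ w ∈ Z, ⟪x - proj x, w - proj x⟫ ≤ 0 := by
  intro x
  haveI : Nonempty Z := hne.to_subtype
  rw [← norm_eq_iInf_iff_real_inner_le_zero hconv (hprojmem x)]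
  refine le_antisymm (le_ciInf fun w => hprojmin x w w.2) ?_
  have hbdd : BddBelow (Set.range fun w : Z => ‖x - (w : E)‖) := by
    refine ⟨0, ?_⟩
    rintro r ⟨w, rfl⟩
    exact norm_nonneg _
  exact ciInf_le hbdd ⟨proj x, hprojmem x⟩

lemma proj_nonexpansive {Z : Set E} (hne : Z.Nonempty) (hconv : Convex ℝ Z)
    {proj : E → E} (hprojmem : ∀ x, proj x ∈ Z)
    (hprojmin : ∀ x, ∀ y ∈ Z, ‖x - proj x‖ ≤ ‖x - y‖) :
    ∀ x y, ‖proj x - proj y‖ ≤ ‖x - y‖ := by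
  intro x y
  have h1 := proj_variational hne hconv hprojmem hprojmin x (proj y) (hprojmem y)
  have h2 := proj_variational hne hconv hprojmem hprojmin y (proj x) (hprojmem x)
  have expand : ⟪x - proj x, proj y - proj x⟫ + ⟪y - proj y, proj x - proj y⟫
      = ⟪x - y, proj y - proj x⟫ + ⟪proj x - proj y, proj x - proj y⟫ := by
    simp only [inner_sub_left, inner_sub_right]; ring
  have h3 : ⟪x - y, proj y - proj x⟫ = -⟪x - y, proj x - proj y⟫ := by
    rw [show proj y - proj x = -(proj x - proj y) by abel, inner_neg_right]
  have key : ⟪proj x - proj y, proj x - proj y⟫ ≤ ⟪x - y, proj x - proj y⟫ := by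
    linarith
  have hsq : ‖proj x - proj y‖ ^ 2 ≤ ‖x - y‖ * ‖proj x - proj y‖ := by
    rw [← real_inner_self_eq_norm_sq]
    exact key.trans (real_inner_le_norm _ _)
  rcases (norm_nonneg (proj x - proj y)).eq_or_lt with h | h
  · rw [← h]; exact norm_nonneg _
  · nlinarith

end Aux

/-- For an `L`-Lipschitz operator `F` on a nonempty closed convex `Z ⊆ ℝⁿ`, `η > 0`, and EG
iterates `z_{k+1/2} = Π_Z(z_k - ηF(z_k))`, `z_{k+1} = Π_Z(z_k - ηF(z_{k+1/2}))`, the tangent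
residual at `z_{k+1}` satisfies
`r^tan_{(F,Z)}(z_{k+1}) ≤ (1 + ηL + (ηL)²) ‖z_k - z_{k+1/2}‖ / η`. -/
theorem tangent_residual_le_of_eg_step {n : ℕ}
    (Z : Set (EuclideanSpace ℝ (Fin n))) (hne : Z.Nonempty) (hcl : IsClosed Z)
    (hconv : Convex ℝ Z)
    (F : EuclideanSpace ℝ (Fin n) → EuclideanSpace ℝ (Fin n)) (L : ℝ)
    (hLip : ∀ z ∈ Z, ∀ z' ∈ Z, ‖F z - F z'‖ ≤ L * ‖z - z'‖)
    (η : ℝ) (hη : 0 < η)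
    (proj : EuclideanSpace ℝ (Fin n) → EuclideanSpace ℝ (Fin n))
    (hprojmem : ∀ x, proj x ∈ Z)
    (hprojmin : ∀ x, ∀ y ∈ Z, ‖x - proj x‖ ≤ ‖x - y‖)
    (zk zhalf znext : EuclideanSpace ℝ (Fin n)) (hzk : zk ∈ Z)
    (hhalf : zhalf = proj (zk - η • F zk))
    (hnext : znext = proj (zk - η • F zhalf)) :
    rtan F Z znext ≤ (1 + η * L + (η * L) ^ 2) * ‖zk - zhalf‖ / η := by
  have hvar := proj_variational hne hconv hprojmem hprojmin
  have hnonexp := proj_nonexpansive hne hconv hprojmem hprojmin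
  have hzhalf : zhalf ∈ Z := hhalf ▸ hprojmem _
  have hznext : znext ∈ Z := hnext ▸ hprojmem _
  set a : EuclideanSpace ℝ (Fin n) := η⁻¹ • (zk - η • F zhalf - znext) with ha
  have hmem : a ∈ normalCone Z znext := by
    intro z' hz'
    rw [ha, real_inner_smul_left]
    have := hvar (zk - η • F zhalf) z' hz'
    rw [← hnext] at this
    exact mul_nonpos_of_nonneg_of_nonpos (inv_nonneg.2 hη.le) this
  have hr : rtan F Z znext ≤ ‖F znext + a‖ := by
    refine csInf_le ⟨0, ?_⟩ ⟨a, hmem, rfl⟩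
    rintro r ⟨b, _, rfl⟩
    exact norm_nonneg _
  have hid : F znext + a = (F znext - F zhalf) + η⁻¹ • (zk - znext) := by
    rw [ha]
    simp only [smul_sub, smul_smul, inv_mul_cancel₀ hη.ne', one_smul]
    abel
  set d := ‖zk - zhalf‖ with hd
  have hB : ‖znext - zhalf‖ ≤ η * L * d := by
    have h1 : ‖znext - zhalf‖ ≤ ‖(zk - η • F zhalf) - (zk - η • F zk)‖ := by
      rw [hnext, hhalf]; exact hnonexp _ _
    have h2 : (zk - η • F zhalf) - (zk - η • F zk) = η • (F zk - F zhalf) := by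
      rw [smul_sub]; abel
    rw [h2, norm_smul, Real.norm_eq_abs, abs_of_pos hη] at h1
    calc ‖znext - zhalf‖ ≤ η * ‖F zk - F zhalf‖ := h1
      _ ≤ η * (L * d) := by
          exact mul_le_mul_of_nonneg_left (hLip zk hzk zhalf hzhalf) hη.le
      _ = η * L * d := by ring
  by_cases hL : 0 ≤ L
  · have hA : ‖F znext - F zhalf‖ ≤ L * (η * L * d) :=
      (hLip znext hznext zhalf hzhalf).trans (mul_le_mul_of_nonneg_left hB hL)
    have hC : ‖zk - znext‖ ≤ d + η * L * d := by
      calc ‖zk - znext‖ = ‖(zk - zhalf) + (zhalf - znext)‖ := by congr 1; abel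
        _ ≤ ‖zk - zhalf‖ + ‖zhalf - znext‖ := norm_add_le _ _
        _ ≤ d + η * L * d := by rw [norm_sub_rev zhalf]; exact add_le_add le_rfl hB
    have htot : ‖F znext + a‖ ≤ L * (η * L * d) + η⁻¹ * (d + η * L * d) := by
      rw [hid]
      calc ‖(F znext - F zhalf) + η⁻¹ • (zk - znext)‖
          ≤ ‖F znext - F zhalf‖ + ‖η⁻¹ • (zk - znext)‖ := norm_add_le _ _
        _ = ‖F znext - F zhalf‖ + η⁻¹ * ‖zk - znext‖ := by
            rw [norm_smul, Real.norm_eq_abs, abs_of_pos (inv_pos.2 hη)]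
        _ ≤ L * (η * L * d) + η⁻¹ * (d + η * L * d) :=
            add_le_add hA (mul_le_mul_of_nonneg_left hC (inv_nonneg.2 hη.le))
    have heq : L * (η * L * d) + η⁻¹ * (d + η * L * d)
        = (1 + η * L + (η * L) ^ 2) * d / η := by
      field_simp
      ring
    exact hr.trans (htot.trans heq.le)
  · push_neg at hL
    have hd0 : d = 0 := by
      have h0 : (0 : ℝ) ≤ ‖znext - zhalf‖ := norm_nonneg _
      nlinarith [norm_nonneg (zk - zhalf), hLip zk hzk zhalf hzhalf,
        norm_nonneg (F zk - F zhalf)]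
    have hzz : zk = zhalf := by
      have := norm_eq_zero.1 hd0
      exact sub_eq_zero.1 this
    subst hzz
    have hzn : znext = zk := by rw [hnext, ← hhalf]
    have hzero : F znext + a = 0 := by
      rw [hid, hzn]; simp
    rw [hzero, norm_zero] at hr
    have : (1 + η * L + (η * L) ^ 2) * d / η = 0 := by rw [hd0]; ring
    rw [this]
    exact hr
end

section
/- Let Z ⊆ ℝⁿ be a nonempty closed convex set, F : Z → ℝⁿ a monotone and L-Lipschitz operator, and let the extragradient algorithm be run with step size η ∈ (0, 1/L) from z₀ ∈ Z, producing iterates z_k, z_{k+1/2}, z_{k+1}. Let z* ∈ Z be a solution of the variational inequality. Then for any integer T > 0 there exists an index t* ∈ {0, 1, …, T−1} such that ‖z_{t*} − z_{t*+1/2}‖² ≤ ‖z₀ − z*‖² / (T(1 − (ηL)²)) and r^tan_{(F,Z)}(z_{t*+1}) ≤ ((1 + ηL + (ηL)²)/η) · ‖z₀ − z*‖ / (√T · √(1 − (ηL)²)). -/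
open scoped RealInnerProductSpace

section helpers
variable {E : Type*} [NormedAddCommGroup E] [InnerProductSpace ℝ E]

lemma eg_key_id (a w b s fa fw : E) (η : ℝ) :
    ‖b - s‖ ^ 2 = ‖a - s‖ ^ 2 - ‖a - w‖ ^ 2 - ‖w - b‖ ^ 2
      + 2 * ⟪a - η • fw - b, s - b⟫ + 2 * ⟪a - η • fa - w, b - w⟫
      + 2 * η * ⟪fw, s - w⟫ + 2 * η * ⟪fw - fa, w - b⟫ := by
  simp only [norm_sub_sq_real, inner_sub_left, inner_sub_right, real_inner_smul_left,
    real_inner_smul_right, real_inner_self_eq_norm_sq]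
  ring

lemma eg_proj_char {Z : Set E} (hconv : Convex ℝ Z)
    (proj : E → E) (hmem : ∀ x, proj x ∈ Z)
    (hmin : ∀ x, ∀ y ∈ Z, ‖x - proj x‖ ≤ ‖x - y‖) :
    ∀ x, ∀ y ∈ Z, ⟪x - proj x, y - proj x⟫ ≤ 0 := by
  intro x y hy
  set p := proj x with hp
  set c := ⟪x - p, y - p⟫ with hc
  by_contra hpos
  push_neg at hpos
  have key : ∀ t : ℝ, 0 < t → t ≤ 1 → 2 * c ≤ t * ‖y - p‖ ^ 2 := by
    intro t ht0 ht1
    have hqZ : (1 - t) • p + t • y ∈ Z :=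
      hconv (hmem x) hy (by linarith) ht0.le (by ring)
    have h1 : ‖x - p‖ ≤ ‖x - ((1 - t) • p + t • y)‖ := hmin x _ hqZ
    have h2 : x - ((1 - t) • p + t • y) = (x - p) - t • (y - p) := by
      module
    have h3 : ‖(x - p) - t • (y - p)‖ ^ 2
        = ‖x - p‖ ^ 2 - 2 * t * c + t ^ 2 * ‖y - p‖ ^ 2 := by
      rw [norm_sub_sq_real, real_inner_smul_right, norm_smul, Real.norm_eq_abs,
        abs_of_pos ht0, mul_pow]
      ring
    have h4 : ‖x - p‖ ^ 2 ≤ ‖(x - p) - t • (y - p)‖ ^ 2 := by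
      rw [← h2]; exact pow_le_pow_left₀ (norm_nonneg _) h1 2
    nlinarith
  set N := ‖y - p‖ ^ 2 with hN
  have hN0 : 0 ≤ N := sq_nonneg _
  rcases eq_or_lt_of_le hN0 with h | h
  · have h1 := key 1 one_pos le_rfl
    rw [← h] at h1; linarith
  · have ht : 0 < min 1 (c / N) := lt_min one_pos (div_pos hpos h)
    have h1 := key _ ht (min_le_left _ _)
    have h2 : min 1 (c / N) * N ≤ c := by
      calc min 1 (c / N) * N ≤ (c / N) * N :=
            mul_le_mul_of_nonneg_right (min_le_right _ _) hN0
        _ = c := div_mul_cancel₀ _ (ne_of_gt h)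
    linarith

lemma eg_proj_nonexp {Z : Set E} (hconv : Convex ℝ Z)
    (proj : E → E) (hmem : ∀ x, proj x ∈ Z)
    (hmin : ∀ x, ∀ y ∈ Z, ‖x - proj x‖ ≤ ‖x - y‖) (x y : E) :
    ‖proj x - proj y‖ ≤ ‖x - y‖ := by
  have char := eg_proj_char hconv proj hmem hmin
  have h1 := char x (proj y) (hmem y)
  have h2 := char y (proj x) (hmem x)
  set px := proj x; set py := proj y
  have hid : ⟪x - y, px - py⟫ - ‖px - py‖ ^ 2
      = -⟪x - px, py - px⟫ - ⟪y - py, px - py⟫ := by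
    simp only [norm_sub_sq_real, inner_sub_left, inner_sub_right, real_inner_self_eq_norm_sq]
    linear_combination real_inner_comm py px
  have hcs : ⟪x - y, px - py⟫ ≤ ‖x - y‖ * ‖px - py‖ := real_inner_le_norm _ _
  nlinarith [norm_nonneg (px - py), norm_nonneg (x - y)]
end helpers

set_option maxHeartbeats 2000000 in
/-- Best-iterate convergence of the extragradient algorithm: for a monotone `L`-Lipschitz
operator on a nonempty closed convex `Z ⊆ ℝⁿ`, step size `η ∈ (0, 1/L)`, a solution `z*`
of the VI, and EG iterates `z_{k+1/2} = Π_Z(z_k - ηF(z_k))`,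
`z_{k+1} = Π_Z(z_k - ηF(z_{k+1/2}))`, for any `T > 0` there is `t* < T` with
`‖z_{t*} - z_{t*+1/2}‖² ≤ ‖z₀ - z*‖²/(T(1-(ηL)²))` and
`r^tan(z_{t*+1}) ≤ ((1+ηL+(ηL)²)/η) · ‖z₀ - z*‖/(√T √(1-(ηL)²))`. -/
theorem eg_best_iterate {n : ℕ}
    (Z : Set (EuclideanSpace ℝ (Fin n))) (hne : Z.Nonempty) (hcl : IsClosed Z)
    (hconv : Convex ℝ Z)
    (F : EuclideanSpace ℝ (Fin n) → EuclideanSpace ℝ (Fin n)) (L : ℝ)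
    (hmono : ∀ z ∈ Z, ∀ z' ∈ Z, 0 ≤ ⟪F z - F z', z - z'⟫)
    (hLip : ∀ z ∈ Z, ∀ z' ∈ Z, ‖F z - F z'‖ ≤ L * ‖z - z'‖)
    (η : ℝ) (hL : 0 < L) (hη0 : 0 < η) (hη1 : η < 1 / L)
    (proj : EuclideanSpace ℝ (Fin n) → EuclideanSpace ℝ (Fin n))
    (hprojmem : ∀ x, proj x ∈ Z)
    (hprojmin : ∀ x, ∀ y ∈ Z, ‖x - proj x‖ ≤ ‖x - y‖)
    (zs : EuclideanSpace ℝ (Fin n)) (hzs : zs ∈ Z)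
    (hsol : ∀ z ∈ Z, ⟪F zs, zs - z⟫ ≤ 0)
    (z zh : ℕ → EuclideanSpace ℝ (Fin n)) (hz0 : z 0 ∈ Z)
    (hzh : ∀ k, zh k = proj (z k - η • F (z k)))
    (hzs' : ∀ k, z (k + 1) = proj (z k - η • F (zh k)))
    (T : ℕ) (hT : 0 < T) :
    ∃ t < T,
      ‖z t - zh t‖ ^ 2 ≤ ‖z 0 - zs‖ ^ 2 / (T * (1 - (η * L) ^ 2)) ∧
      rtan F Z (z (t + 1)) ≤
        (1 + η * L + (η * L) ^ 2) / η *
          (‖z 0 - zs‖ / (Real.sqrt T * Real.sqrt (1 - (η * L) ^ 2))) := by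
  have char := eg_proj_char hconv proj hprojmem hprojmin
  have hηL : η * L < 1 := by
    rw [lt_div_iff₀ hL] at hη1; exact hη1
  have hηL0 : 0 ≤ η * L := mul_nonneg hη0.le hL.le
  have hq1 : (η * L) ^ 2 < 1 := by nlinarith
  have hq0 : 0 ≤ (η * L) ^ 2 := sq_nonneg _
  have hqpos : 0 < 1 - (η * L) ^ 2 := by linarith
  -- membership of iterates
  have hzmem : ∀ k, z k ∈ Z := by
    intro k
    cases k with
    | zero => exact hz0
    | succ m => rw [hzs' m]; exact hprojmem _
  have hzhmem : ∀ k, zh k ∈ Z := by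
    intro k; rw [hzh k]; exact hprojmem _
  -- per-step descent
  have step : ∀ k, ‖z (k + 1) - zs‖ ^ 2
      ≤ ‖z k - zs‖ ^ 2 - (1 - (η * L) ^ 2) * ‖z k - zh k‖ ^ 2 := by
    intro k
    have E2 : ⟪z k - η • F (z k) - zh k, z (k + 1) - zh k⟫ ≤ 0 := by
      have := char (z k - η • F (z k)) (z (k + 1)) (hzmem (k + 1))
      rwa [← hzh k] at this
    have E1 : ⟪z k - η • F (zh k) - z (k + 1), zs - z (k + 1)⟫ ≤ 0 := by
      have := char (z k - η • F (zh k)) zs hzs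
      rwa [← hzs' k] at this
    have E3 : ⟪F (zh k), zs - zh k⟫ ≤ 0 := by
      have hm := hmono (zh k) (hzhmem k) zs hzs
      have hs := hsol (zh k) (hzhmem k)
      have hid : ⟪F (zh k), zs - zh k⟫
          = -⟪F (zh k) - F zs, zh k - zs⟫ + ⟪F zs, zs - zh k⟫ := by
        simp only [inner_sub_left, inner_sub_right]; ring
      rw [hid]; linarith
    have E4 : ⟪F (zh k) - F (z k), zh k - z (k + 1)⟫
        ≤ L * ‖zh k - z k‖ * ‖zh k - z (k + 1)‖ := by
      calc ⟪F (zh k) - F (z k), zh k - z (k + 1)⟫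
          ≤ ‖F (zh k) - F (z k)‖ * ‖zh k - z (k + 1)‖ := real_inner_le_norm _ _
        _ ≤ L * ‖zh k - z k‖ * ‖zh k - z (k + 1)‖ :=
            mul_le_mul_of_nonneg_right (hLip _ (hzhmem k) _ (hzmem k)) (norm_nonneg _)
    have hid := eg_key_id (z k) (zh k) (z (k + 1)) zs (F (z k)) (F (zh k)) η
    have hE4' : η * ⟪F (zh k) - F (z k), zh k - z (k + 1)⟫
        ≤ η * (L * ‖zh k - z k‖ * ‖zh k - z (k + 1)‖) :=
      mul_le_mul_of_nonneg_left E4 hη0.le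
    have hE3' : η * ⟪F (zh k), zs - zh k⟫ ≤ 0 := mul_nonpos_of_nonneg_of_nonpos hη0.le E3
    rw [norm_sub_rev (zh k) (z k)] at hE4'
    nlinarith [sq_nonneg (η * L * ‖z k - zh k‖ - ‖zh k - z (k + 1)‖)]
  -- residual bound
  have res : ∀ k, rtan F Z (z (k + 1))
      ≤ (1 + η * L + (η * L) ^ 2) / η * ‖z k - zh k‖ := by
    intro k
    set a := z k with ha
    set w := zh k with hw
    set b := z (k + 1) with hb
    have hNmem : η⁻¹ • (a - η • F w - b) ∈ normalCone Z b := by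
      intro z' hz'
      rw [real_inner_smul_left]
      have hchar : ⟪a - η • F w - b, z' - b⟫ ≤ 0 := by
        have := char (a - η • F w) z' hz'
        rwa [← hzs' k] at this
      exact mul_nonpos_of_nonneg_of_nonpos (inv_nonneg.2 hη0.le) hchar
    have hrt : rtan F Z b ≤ ‖F b + η⁻¹ • (a - η • F w - b)‖ := by
      apply csInf_le
      · exact ⟨0, fun r hr => by
          rcases hr with ⟨v, _, rfl⟩; exact norm_nonneg _⟩
      · exact ⟨_, hNmem, rfl⟩
    have hsplit : F b + η⁻¹ • (a - η • F w - b) = (F b - F w) + η⁻¹ • (a - b) := by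
      rw [show a - η • F w - b = (a - b) - η • F w from by abel, smul_sub, smul_smul,
        inv_mul_cancel₀ hη0.ne', one_smul]
      abel
    have h1 : ‖F b - F w‖ ≤ L * ‖b - w‖ := hLip b (hzmem (k + 1)) w (hzhmem k)
    have h2 : ‖b - w‖ ≤ η * L * ‖a - w‖ := by
      have hne' : ‖proj (a - η • F w) - proj (a - η • F a)‖
          ≤ ‖(a - η • F w) - (a - η • F a)‖ :=
        eg_proj_nonexp hconv proj hprojmem hprojmin _ _
      rw [← hzs' k, ← hzh k] at hne'
      have hdiff : (a - η • F w) - (a - η • F a) = η • (F a - F w) := by module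
      rw [hdiff, norm_smul, Real.norm_eq_abs, abs_of_pos hη0] at hne'
      have hlip2 : ‖F a - F w‖ ≤ L * ‖a - w‖ := hLip a (hzmem k) w (hzhmem k)
      calc ‖b - w‖ ≤ η * ‖F a - F w‖ := hne'
        _ ≤ η * (L * ‖a - w‖) := mul_le_mul_of_nonneg_left hlip2 hη0.le
        _ = η * L * ‖a - w‖ := by ring
    have h3 : ‖η⁻¹ • (a - b)‖ = η⁻¹ * ‖a - b‖ := by
      rw [norm_smul, Real.norm_eq_abs, abs_of_pos (inv_pos.2 hη0)]
    have h4 : ‖a - b‖ ≤ ‖a - w‖ + ‖w - b‖ := norm_sub_le_norm_sub_add_norm_sub a w b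
    have h5 : ‖w - b‖ = ‖b - w‖ := norm_sub_rev _ _
    have h6 : ‖F b + η⁻¹ • (a - η • F w - b)‖ ≤ ‖F b - F w‖ + η⁻¹ * ‖a - b‖ := by
      rw [hsplit, ← h3]; exact norm_add_le _ _
    have hηinv : (0:ℝ) < η⁻¹ := inv_pos.2 hη0
    have hcoef : (1 + η * L + (η * L) ^ 2) / η = η⁻¹ + L + η * L ^ 2 := by
      field_simp
    rw [hcoef]
    have hbound : ‖F b - F w‖ + η⁻¹ * ‖a - b‖
        ≤ (η⁻¹ + L + η * L ^ 2) * ‖a - w‖ := by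
      have hb1 : ‖F b - F w‖ ≤ L * (η * L * ‖a - w‖) :=
        h1.trans (mul_le_mul_of_nonneg_left h2 hL.le)
      have hb2 : η⁻¹ * ‖a - b‖ ≤ η⁻¹ * (‖a - w‖ + η * L * ‖a - w‖) := by
        apply mul_le_mul_of_nonneg_left _ hηinv.le
        calc ‖a - b‖ ≤ ‖a - w‖ + ‖w - b‖ := h4
          _ = ‖a - w‖ + ‖b - w‖ := by rw [h5]
          _ ≤ ‖a - w‖ + η * L * ‖a - w‖ := by linarith
      have hexp : η⁻¹ * (‖a - w‖ + η * L * ‖a - w‖) = η⁻¹ * ‖a - w‖ + L * ‖a - w‖ := by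
        field_simp
      rw [hexp] at hb2
      nlinarith [norm_nonneg (a - w)]
    linarith [hrt.trans h6]
  -- summation
  set g : ℕ → ℝ := fun k => ‖z k - zh k‖ ^ 2 with hg
  have hsum : (1 - (η * L) ^ 2) * ∑ k ∈ Finset.range T, g k ≤ ‖z 0 - zs‖ ^ 2 := by
    rw [Finset.mul_sum]
    calc ∑ k ∈ Finset.range T, (1 - (η * L) ^ 2) * g k
        ≤ ∑ k ∈ Finset.range T, (‖z k - zs‖ ^ 2 - ‖z (k + 1) - zs‖ ^ 2) := by
          apply Finset.sum_le_sum
          intro k _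
          have := step k
          simp only [hg]
          linarith
      _ = ‖z 0 - zs‖ ^ 2 - ‖z T - zs‖ ^ 2 :=
          Finset.sum_range_sub' (fun k => ‖z k - zs‖ ^ 2) T
      _ ≤ ‖z 0 - zs‖ ^ 2 := by linarith [sq_nonneg ‖z T - zs‖]
  obtain ⟨t, htmem, htmin⟩ :=
    Finset.exists_min_image (Finset.range T) g ⟨0, Finset.mem_range.2 hT⟩
  have hTg : (T : ℝ) * g t ≤ ∑ k ∈ Finset.range T, g k := by
    have h := Finset.card_nsmul_le_sum (Finset.range T) g (g t) (fun i hi => htmin i hi)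
    rwa [Finset.card_range, nsmul_eq_mul] at h
  have hTpos : (0:ℝ) < T := Nat.cast_pos.2 hT
  have hbound1 : g t ≤ ‖z 0 - zs‖ ^ 2 / (T * (1 - (η * L) ^ 2)) := by
    rw [le_div_iff₀ (by positivity)]
    have h := mul_le_mul_of_nonneg_left hTg hqpos.le
    nlinarith
  refine ⟨t, Finset.mem_range.1 htmem, hbound1, ?_⟩
  set B := ‖z 0 - zs‖ / (Real.sqrt T * Real.sqrt (1 - (η * L) ^ 2)) with hB
  have hBsq : B ^ 2 = ‖z 0 - zs‖ ^ 2 / (T * (1 - (η * L) ^ 2)) := by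
    rw [hB, div_pow, mul_pow, Real.sq_sqrt hTpos.le, Real.sq_sqrt hqpos.le]
  have hB0 : 0 ≤ B := by positivity
  have hgt : ‖z t - zh t‖ ≤ B := by
    have hsq : ‖z t - zh t‖ ^ 2 ≤ B ^ 2 := by rw [hBsq]; exact hbound1
    nlinarith [norm_nonneg (z t - zh t)]
  have hC0 : 0 ≤ (1 + η * L + (η * L) ^ 2) / η :=
    div_nonneg (by nlinarith) hη0.le
  calc rtan F Z (z (t + 1)) ≤ (1 + η * L + (η * L) ^ 2) / η * ‖z t - zh t‖ := res t
    _ ≤ (1 + η * L + (η * L) ^ 2) / η * B := mul_le_mul_of_nonneg_left hgt hC0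
end

section
/- Let F : ℝⁿ → ℝⁿ be a monotone and L-Lipschitz operator, and let the unconstrained extragradient algorithm with step size η ∈ (0, 1/L) update z_{k+1/2} = z_k − ηF(z_k) and z_{k+1} = z_k − ηF(z_{k+1/2}). Then for every k, ‖F(z_k)‖ ≥ ‖F(z_{k+1})‖; that is, the norm of the operator along the iterates is non-increasing. -/
open scoped RealInnerProductSpace

/-- Monotonicity of the operator norm for the unconstrained extragradient algorithm:
for a monotone `L`-Lipschitz operator `F : ℝⁿ → ℝⁿ` and step size `η ∈ (0, 1/L)`, the
iterates `z_{k+1/2} = z_k - ηF(z_k)`, `z_{k+1} = z_k - ηF(z_{k+1/2})` satisfy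
`‖F(z_k)‖ ≥ ‖F(z_{k+1})‖` for every `k`. -/
theorem eg_unconstrained_operator_norm_nonincreasing {n : ℕ}
    (F : EuclideanSpace ℝ (Fin n) → EuclideanSpace ℝ (Fin n)) (L : ℝ)
    (hmono : ∀ z z', 0 ≤ ⟪F z - F z', z - z'⟫)
    (hLip : ∀ z z', ‖F z - F z'‖ ≤ L * ‖z - z'‖)
    (η : ℝ) (hL : 0 < L) (hη0 : 0 < η) (hη1 : η < 1 / L)
    (z : ℕ → EuclideanSpace ℝ (Fin n))
    (hz : ∀ k, z (k + 1) = z k - η • F (z k - η • F (z k))) :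
    ∀ k, ‖F (z (k + 1))‖ ≤ ‖F (z k)‖ := by
  intro k
  set w : EuclideanSpace ℝ (Fin n) := z k - η • F (z k) with hw
  set a : EuclideanSpace ℝ (Fin n) := F (z k) with ha
  set b : EuclideanSpace ℝ (Fin n) := F w with hb
  set c : EuclideanSpace ℝ (Fin n) := F (z (k + 1)) with hc
  have hzk : z (k + 1) = z k - η • b := hz k
  have hd : z k - z (k + 1) = η • b := by rw [hzk]; abel
  -- monotonicity between z k and z (k+1)
  have h1 : 0 ≤ η * ⟪a - c, b⟫ := by
    have h := hmono (z k) (z (k + 1))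
    rwa [hd, real_inner_smul_right] at h
  have h1' : ⟪b, c - a⟫ ≤ 0 := by
    have hq : 0 ≤ ⟪a - c, b⟫ := by by_contra h; push_neg at h; nlinarith
    rw [real_inner_comm] at hq
    have he : ⟪b, c - a⟫ = -⟪b, a - c⟫ := by rw [← inner_neg_right, neg_sub]
    linarith [he ▸ neg_nonpos_of_nonneg hq]
  -- Lipschitz between z (k+1) and w
  have h2 : ‖c - b‖ ≤ L * (η * ‖a - b‖) := by
    have h := hLip (z (k + 1)) w
    have he : z (k + 1) - w = η • (a - b) := by
      rw [hzk, hw, smul_sub]; abel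
    rwa [he, norm_smul, Real.norm_of_nonneg hη0.le] at h
  have hLη : η * L < 1 := (lt_div_iff₀ hL).mp hη1
  have h2' : ‖c - b‖ ≤ ‖a - b‖ := by
    calc ‖c - b‖ ≤ L * (η * ‖a - b‖) := h2
      _ = (η * L) * ‖a - b‖ := by ring
      _ ≤ 1 * ‖a - b‖ := mul_le_mul_of_nonneg_right hLη.le (norm_nonneg _)
      _ = ‖a - b‖ := one_mul _
  -- key identity
  have key : ‖c‖ ^ 2 - ‖a‖ ^ 2 = 2 * ⟪b, c - a⟫ + ‖c - b‖ ^ 2 - ‖a - b‖ ^ 2 := by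
    rw [@norm_sub_sq_real, @norm_sub_sq_real, inner_sub_right,
      real_inner_comm c b, real_inner_comm a b]
    ring
  have hsq : ‖c‖ ^ 2 ≤ ‖a‖ ^ 2 := by
    nlinarith [norm_nonneg (c - b), norm_nonneg (a - b)]
  by_contra h
  push_neg at h
  nlinarith [norm_nonneg a]
end

section
/- Let F : ℝⁿ → ℝⁿ be a monotone and L-Lipschitz operator and let z* ∈ ℝⁿ satisfy F(z*) = 0 (a solution of the unconstrained variational inequality). For any T ≥ 1 and D > 0, the T-th iterate z_T of the unconstrained extragradient algorithm with constant step size η ∈ (0, 1/L) started at z₀ satisfies Gap_{ℝⁿ,F,D}(z_T) = sup_{z′ ∈ B(z_T,D)} ⟨F(z_T), z_T − z′⟩ ≤ (1/√T) · 3D‖z₀ − z*‖ / (η√(1 − (ηL)²)). -/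
open scoped RealInnerProductSpace

/-- Residual monotonicity of extragradient: `‖F(z_{k+1})‖ ≤ ‖F(z_k)‖`. -/
lemma eg_residual_mono {n : ℕ}
    (F : EuclideanSpace ℝ (Fin n) → EuclideanSpace ℝ (Fin n)) (L : ℝ)
    (hmono : ∀ z z', 0 ≤ ⟪F z - F z', z - z'⟫)
    (hLip : ∀ z z', ‖F z - F z'‖ ≤ L * ‖z - z'‖)
    (η : ℝ) (hη0 : 0 < η) (hx : η * L ≤ 1)
    (p q : EuclideanSpace ℝ (Fin n)) (hq : q = p - η • F (p - η • F p)) :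
    ‖F q‖ ≤ ‖F p‖ := by
  set a := F p with ha
  set w := p - η • F p with hw
  set b := F w with hb
  set c := F q with hc
  have hpq : p - q = η • b := by rw [hq]; abel
  have hM : 0 ≤ ⟪a - c, b⟫ := by
    have h0 := hmono p q
    rw [hpq, real_inner_smul_right] at h0
    nlinarith
  have hwq : w - q = η • (b - a) := by
    rw [hq, hw, smul_sub]; abel
  have hLwq : ‖b - c‖ ≤ ‖b - a‖ := by
    have h1 := hLip w q
    rw [hwq, norm_smul, Real.norm_of_nonneg hη0.le] at h1
    have hba : (0:ℝ) ≤ ‖b - a‖ := norm_nonneg _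
    calc ‖b - c‖ ≤ L * (η * ‖b - a‖) := h1
      _ = (η * L) * ‖b - a‖ := by ring
      _ ≤ 1 * ‖b - a‖ := mul_le_mul_of_nonneg_right hx hba
      _ = ‖b - a‖ := one_mul _
  have hcb := norm_sub_sq_real c b
  have hab := norm_sub_sq_real a b
  have hiac : ⟪a - c, b⟫ = ⟪a, b⟫ - ⟪c, b⟫ := inner_sub_left _ _ _
  have hsq : ‖c‖ ^ 2 ≤ ‖a‖ ^ 2 := by
    have h2 : ‖c - b‖ ^ 2 ≤ ‖a - b‖ ^ 2 := by
      nlinarith [norm_nonneg (c - b), norm_nonneg (a - b), hLwq, norm_sub_rev b c,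
        norm_sub_rev b a]
    nlinarith
  have h3 := Real.sqrt_le_sqrt hsq
  rwa [Real.sqrt_sq (norm_nonneg c), Real.sqrt_sq (norm_nonneg a)] at h3

/-- Descent inequality for extragradient. -/
lemma eg_descent {n : ℕ}
    (F : EuclideanSpace ℝ (Fin n) → EuclideanSpace ℝ (Fin n)) (L : ℝ)
    (hmono : ∀ z z', 0 ≤ ⟪F z - F z', z - z'⟫)
    (hLip : ∀ z z', ‖F z - F z'‖ ≤ L * ‖z - z'‖)
    (η : ℝ) (hL : 0 < L) (hη0 : 0 < η)
    (zs : EuclideanSpace ℝ (Fin n)) (hsol : F zs = 0)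
    (p q : EuclideanSpace ℝ (Fin n)) (hq : q = p - η • F (p - η • F p)) :
    ‖q - zs‖ ^ 2 ≤ ‖p - zs‖ ^ 2 - η ^ 2 * (1 - (η * L) ^ 2) * ‖F p‖ ^ 2 := by
  set a := F p with ha
  set w := p - η • F p with hw
  set b := F w with hb
  have hqz : q - zs = (p - zs) - η • b := by rw [hq]; abel
  have hexp : ‖q - zs‖ ^ 2 = ‖p - zs‖ ^ 2 - 2 * (η * ⟪p - zs, b⟫) + η ^ 2 * ‖b‖ ^ 2 := by
    rw [hqz, norm_sub_sq_real, real_inner_smul_right, norm_smul,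
      Real.norm_of_nonneg hη0.le, mul_pow]
  have hmonw : 0 ≤ ⟪b, w - zs⟫ := by
    have h0 := hmono w zs
    rwa [hsol, sub_zero] at h0
  have hdecomp : ⟪p - zs, b⟫ = ⟪w - zs, b⟫ + η * ⟪a, b⟫ := by
    have hpz : p - zs = (w - zs) + η • a := by rw [hw]; abel
    rw [hpz, inner_add_left, real_inner_smul_left]
  have hlip2 : ‖b - a‖ ≤ η * L * ‖a‖ := by
    have h1 := hLip w p
    have hwp : w - p = (-η) • a := by rw [hw, neg_smul]; abel
    rw [hwp, norm_smul] at h1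
    simp only [Real.norm_eq_abs, abs_neg, abs_of_nonneg hη0.le] at h1
    calc ‖b - a‖ ≤ L * (η * ‖a‖) := h1
      _ = η * L * ‖a‖ := by ring
  have hba2 : ‖b - a‖ ^ 2 ≤ (η * L) ^ 2 * ‖a‖ ^ 2 := by
    nlinarith [norm_nonneg (b - a), mul_pos hη0 hL, norm_nonneg a]
  have hbae : ‖b - a‖ ^ 2 = ‖b‖ ^ 2 - 2 * ⟪b, a⟫ + ‖a‖ ^ 2 := norm_sub_sq_real b a
  have hsym : ⟪a, b⟫ = ⟪b, a⟫ := real_inner_comm b a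
  have hsym2 : ⟪w - zs, b⟫ = ⟪b, w - zs⟫ := real_inner_comm b (w - zs)
  have h3 : ‖q - zs‖ ^ 2 =
      ‖p - zs‖ ^ 2 - 2 * η * ⟪w - zs, b⟫ - 2 * η ^ 2 * ⟪a, b⟫ + η ^ 2 * ‖b‖ ^ 2 := by
    rw [hexp, hdecomp]; ring
  have h4 : η ^ 2 * ‖b‖ ^ 2 - 2 * η ^ 2 * ⟪a, b⟫ =
      η ^ 2 * ‖b - a‖ ^ 2 - η ^ 2 * ‖a‖ ^ 2 := by
    rw [hbae, hsym]; ring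
  have h5 : η ^ 2 * ‖b - a‖ ^ 2 ≤ η ^ 2 * ((η * L) ^ 2 * ‖a‖ ^ 2) :=
    mul_le_mul_of_nonneg_left hba2 (sq_nonneg η)
  have h6 : 0 ≤ η * ⟪w - zs, b⟫ := mul_nonneg hη0.le (hsym2 ▸ hmonw)
  nlinarith [h3, h4, h5, h6]

set_option maxHeartbeats 1000000 in
/-- Last-iterate convergence of the unconstrained extragradient algorithm: for a monotone
`L`-Lipschitz operator `F : ℝⁿ → ℝⁿ` with `F z* = 0`, step size `η ∈ (0, 1/L)`, iterates
`z_{k+1/2} = z_k - ηF(z_k)`, `z_{k+1} = z_k - ηF(z_{k+1/2})`, any `T ≥ 1` and `D > 0`,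
`Gap_{ℝⁿ,F,D}(z_T) = sup_{z' ∈ B(z_T,D)} ⟨F z_T, z_T - z'⟩ ≤ 3D‖z₀ - z*‖/(√T · η√(1-(ηL)²))`. -/
theorem eg_unconstrained_last_iterate_gap {n : ℕ}
    (F : EuclideanSpace ℝ (Fin n) → EuclideanSpace ℝ (Fin n)) (L : ℝ)
    (hmono : ∀ z z', 0 ≤ ⟪F z - F z', z - z'⟫)
    (hLip : ∀ z z', ‖F z - F z'‖ ≤ L * ‖z - z'‖)
    (η : ℝ) (hL : 0 < L) (hη0 : 0 < η) (hη1 : η < 1 / L)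
    (zs : EuclideanSpace ℝ (Fin n)) (hsol : F zs = 0)
    (z : ℕ → EuclideanSpace ℝ (Fin n))
    (hz : ∀ k, z (k + 1) = z k - η • F (z k - η • F (z k)))
    (T : ℕ) (hT : 1 ≤ T) (D : ℝ) (hD : 0 < D) :
    sSup ((fun z' => ⟪F (z T), z T - z'⟫) '' Metric.closedBall (z T) D) ≤
      (1 / Real.sqrt T) * (3 * D * ‖z 0 - zs‖ / (η * Real.sqrt (1 - (η * L) ^ 2))) := by
  have hx1 : η * L < 1 := by
    have h := (lt_div_iff₀ hL).mp hη1
    linarith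
  have hx0 : 0 < η * L := mul_pos hη0 hL
  set C : ℝ := η ^ 2 * (1 - (η * L) ^ 2) with hC
  have h1x2 : 0 < 1 - (η * L) ^ 2 := by nlinarith
  have hCpos : 0 < C := by positivity
  have hres : ∀ k, ‖F (z (k + 1))‖ ≤ ‖F (z k)‖ := fun k =>
    eg_residual_mono F L hmono hLip η hη0 hx1.le (z k) (z (k + 1)) (hz k)
  have hsum : ∀ k : ℕ, ‖z k - zs‖ ^ 2 + (k : ℝ) * C * ‖F (z k)‖ ^ 2 ≤ ‖z 0 - zs‖ ^ 2 := by
    intro k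
    induction k with
    | zero => simp
    | succ i ih =>
      have hdesc := eg_descent F L hmono hLip η hL hη0 zs hsol (z i) (z (i + 1)) (hz i)
      have hmon : ‖F (z (i + 1))‖ ^ 2 ≤ ‖F (z i)‖ ^ 2 := by
        nlinarith [hres i, norm_nonneg (F (z (i + 1)))]
      have hic : (0:ℝ) ≤ (i : ℝ) * C := by positivity
      push_cast
      nlinarith [mul_le_mul_of_nonneg_left hmon hic]
  have hTpos : (0:ℝ) < (T : ℝ) := by exact_mod_cast hT
  have hTbound : (T : ℝ) * C * ‖F (z T)‖ ^ 2 ≤ ‖z 0 - zs‖ ^ 2 := by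
    nlinarith [hsum T, sq_nonneg ‖z T - zs‖]
  set g : ℝ := ‖F (z T)‖ with hg
  set R : ℝ := ‖z 0 - zs‖ with hR
  have hgnn : 0 ≤ g := norm_nonneg _
  have hRnn : 0 ≤ R := norm_nonneg _
  set s : ℝ := Real.sqrt (1 - (η * L) ^ 2) with hs
  have hspos : 0 < s := Real.sqrt_pos.mpr h1x2
  have hssq : s ^ 2 = 1 - (η * L) ^ 2 := Real.sq_sqrt h1x2.le
  set t : ℝ := Real.sqrt T with ht
  have htpos : 0 < t := Real.sqrt_pos.mpr hTpos
  have htsq : t ^ 2 = (T : ℝ) := Real.sq_sqrt hTpos.le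
  have hkey : t * (η * s) * g ≤ R := by
    have h2 : (t * (η * s) * g) ^ 2 ≤ R ^ 2 := by
      have he : (t * (η * s) * g) ^ 2 = (T : ℝ) * C * g ^ 2 := by
        rw [mul_pow, mul_pow, mul_pow, htsq, hssq, hC]
      rw [he]; exact hTbound
    nlinarith [mul_nonneg (mul_nonneg (mul_nonneg htpos.le hη0.le) hspos.le) hgnn]
  have hsup : sSup ((fun z' => ⟪F (z T), z T - z'⟫) '' Metric.closedBall (z T) D) ≤ D * g := by
    apply Real.sSup_le
    · rintro y ⟨z', hz', rfl⟩
      have hd : ‖z T - z'‖ ≤ D := by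
        rw [← dist_eq_norm, dist_comm]
        exact Metric.mem_closedBall.mp hz'
      calc ⟪F (z T), z T - z'⟫ ≤ ‖F (z T)‖ * ‖z T - z'‖ := real_inner_le_norm _ _
        _ ≤ g * D := mul_le_mul_of_nonneg_left hd hgnn
        _ = D * g := mul_comm _ _
    · positivity
  refine hsup.trans ?_
  have hrhs : (1 / t) * (3 * D * R / (η * s)) = 3 * D * R / (t * (η * s)) := by
    field_simp
  rw [hrhs, le_div_iff₀ (by positivity)]
  nlinarith [mul_le_mul_of_nonneg_left hkey hD.le]
end

section
/- Let Z ⊆ ℝⁿ be a nonempty closed convex set and F : Z → ℝⁿ a monotone and L-Lipschitz operator. For any step size η ∈ (0, 1/L) and any z_k ∈ Z, the extragradient update z_{k+1/2} = Π_Z(z_k − ηF(z_k)), z_{k+1} = Π_Z(z_k − ηF(z_{k+1/2})) satisfies r^tan_{(F,Z)}(z_k) ≥ r^tan_{(F,Z)}(z_{k+1}); that is, the tangent residual is non-increasing along extragradient iterates. -/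
open scoped RealInnerProductSpace

section Aux

variable {E : Type*} [NormedAddCommGroup E] [InnerProductSpace ℝ E]

/-- The key algebraic inequality behind monotonicity of the tangent residual
(an explicit sum-of-squares certificate). Here `g1 = zk - zhalf`, `g2 = zk - znext`,
`K = η•F zk`, `H = η•F zhalf`, `Nv = η•F znext`, `A = η•a`, `t = ηL`. -/
lemma key_ineq_aux (g1 g2 K H Nv A : E) (t : ℝ) (ht1 : t ≤ 1)
    (h1 : 0 ≤ ⟪A, g1⟫)
    (h4 : ⟪g1 - K, g1 - g2⟫ ≤ 0)
    (h5 : ⟪g2 - H, g2⟫ ≤ 0)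
    (h8 : 0 ≤ ⟪K - Nv, g2⟫)
    (h12 : ‖H - Nv‖ ≤ t * ‖g2 - g1‖) :
    ‖Nv - H + g2‖ ≤ ‖K + A‖ := by
  have key : ‖K + A‖^2 - ‖Nv - H + g2‖^2 =
      2*⟪A, g1⟫ + 2*(-⟪g1 - K, g1 - g2⟫) + 2*(-⟪g2 - H, g2⟫) + 2*⟪K - Nv, g2⟫
      + (‖g2 - g1‖^2 - ‖H - Nv‖^2) + ‖g1 - K - A‖^2 := by
    simp only [← real_inner_self_eq_norm_sq, inner_add_left, inner_add_right,
      inner_sub_left, inner_sub_right]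
    linarith [real_inner_comm A g1, real_inner_comm K g1, real_inner_comm K g2,
      real_inner_comm K A, real_inner_comm K H, real_inner_comm K Nv,
      real_inner_comm g1 g2, real_inner_comm A g2, real_inner_comm H g2,
      real_inner_comm Nv g2, real_inner_comm H Nv, real_inner_comm H g1,
      real_inner_comm Nv g1, real_inner_comm A H, real_inner_comm A Nv]
  have hsq : ‖H - Nv‖^2 ≤ ‖g2 - g1‖^2 := by
    have h0 : (0:ℝ) ≤ ‖H - Nv‖ := norm_nonneg _
    have h2 : t * ‖g2 - g1‖ ≤ ‖g2 - g1‖ := by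
      nlinarith [norm_nonneg (g2 - g1)]
    nlinarith [norm_nonneg (g2 - g1)]
  have hfin : ‖Nv - H + g2‖^2 ≤ ‖K + A‖^2 := by
    nlinarith [sq_nonneg ‖g1 - K - A‖, norm_nonneg (g1 - K - A)]
  nlinarith [norm_nonneg (Nv - H + g2), norm_nonneg (K + A)]

/-- Variational characterization of a metric projection onto a convex set. -/
lemma proj_inner_le_aux {Z : Set E} (hconv : Convex ℝ Z)
    (proj : E → E) (hprojmem : ∀ x, proj x ∈ Z)
    (hprojmin : ∀ x, ∀ y ∈ Z, ‖x - proj x‖ ≤ ‖x - y‖)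
    (x : E) {y : E} (hy : y ∈ Z) : ⟪x - proj x, y - proj x⟫ ≤ 0 := by
  set p := proj x with hp
  have hkey : ∀ s : ℝ, 0 < s → s ≤ 1 → 2 * s * ⟪x - p, y - p⟫ ≤ s^2 * ‖y - p‖^2 := by
    intro s hs0 hs1
    have hmem : p + s • (y - p) ∈ Z := by
      have := hconv (hprojmem x) hy (by linarith : (0:ℝ) ≤ 1 - s) (le_of_lt hs0) (by ring)
      convert this using 1
      module
    have hle := hprojmin x _ hmem
    have hexp : ‖x - (p + s • (y - p))‖^2
        = ‖x - p‖^2 - 2 * s * ⟪x - p, y - p⟫ + s^2 * ‖y - p‖^2 := by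
      have : x - (p + s • (y - p)) = (x - p) - s • (y - p) := by abel
      rw [this, norm_sub_sq_real, real_inner_smul_right, norm_smul, mul_pow,
        Real.norm_eq_abs, sq_abs]
      ring
    nlinarith [norm_nonneg (x - (p + s • (y - p))), norm_nonneg (x - p),
      sq_nonneg (‖x - (p + s • (y - p))‖ - ‖x - p‖)]
  by_contra hcon
  push_neg at hcon
  set T := ⟪x - p, y - p⟫ with hT
  set Q := ‖y - p‖^2 with hQ
  have hQ0 : 0 ≤ Q := sq_nonneg _
  rcases eq_or_lt_of_le hQ0 with hQz | hQpos
  · have := hkey 1 one_pos le_rfl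
    rw [← hQz] at this
    linarith
  · set s := min 1 (T / Q) with hs
    have hs0 : 0 < s := lt_min one_pos (div_pos hcon hQpos)
    have hs1 : s ≤ 1 := min_le_left _ _
    have hsQ : s * Q ≤ T := by
      calc s * Q ≤ (T / Q) * Q := by
            apply mul_le_mul_of_nonneg_right (min_le_right _ _) (le_of_lt hQpos)
        _ = T := by field_simp
    have := hkey s hs0 hs1
    nlinarith

end Aux

/-- Monotonicity of the tangent residual along extragradient iterates: for a monotone
`L`-Lipschitz operator `F` on a nonempty closed convex `Z ⊆ ℝⁿ`, step size `η ∈ (0, 1/L)`,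
and EG update `z_{k+1/2} = Π_Z(z_k - ηF(z_k))`, `z_{k+1} = Π_Z(z_k - ηF(z_{k+1/2}))`,
one has `r^tan_{(F,Z)}(z_k) ≥ r^tan_{(F,Z)}(z_{k+1})`. -/
theorem eg_tangent_residual_nonincreasing {n : ℕ}
    (Z : Set (EuclideanSpace ℝ (Fin n))) (hne : Z.Nonempty) (hcl : IsClosed Z)
    (hconv : Convex ℝ Z)
    (F : EuclideanSpace ℝ (Fin n) → EuclideanSpace ℝ (Fin n)) (L : ℝ)
    (hmono : ∀ z ∈ Z, ∀ z' ∈ Z, 0 ≤ ⟪F z - F z', z - z'⟫)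
    (hLip : ∀ z ∈ Z, ∀ z' ∈ Z, ‖F z - F z'‖ ≤ L * ‖z - z'‖)
    (η : ℝ) (hL : 0 < L) (hη0 : 0 < η) (hη1 : η < 1 / L)
    (proj : EuclideanSpace ℝ (Fin n) → EuclideanSpace ℝ (Fin n))
    (hprojmem : ∀ x, proj x ∈ Z)
    (hprojmin : ∀ x, ∀ y ∈ Z, ‖x - proj x‖ ≤ ‖x - y‖)
    (zk zhalf znext : EuclideanSpace ℝ (Fin n)) (hzk : zk ∈ Z)
    (hhalf : zhalf = proj (zk - η • F zk))
    (hnext : znext = proj (zk - η • F zhalf)) :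
    rtan F Z znext ≤ rtan F Z zk := by
  have hzh : zhalf ∈ Z := hhalf ▸ hprojmem _
  have hzn : znext ∈ Z := hnext ▸ hprojmem _
  set c : EuclideanSpace ℝ (Fin n) := η⁻¹ • (zk - η • F zhalf - znext) with hcdef
  -- c belongs to the normal cone at znext
  have hc : c ∈ normalCone Z znext := by
    intro z' hz'
    have h := proj_inner_le_aux hconv proj hprojmem hprojmin (zk - η • F zhalf) hz'
    rw [← hnext] at h
    rw [hcdef, real_inner_smul_left]
    exact mul_nonpos_of_nonneg_of_nonpos (inv_nonneg.mpr hη0.le) h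
  -- the main pointwise bound
  have hmain : ∀ a ∈ normalCone Z zk, ‖F znext + c‖ ≤ ‖F zk + a‖ := by
    intro a ha
    have ht1 : η * L ≤ 1 := le_of_lt ((lt_div_iff₀ hL).mp hη1)
    have h1 : 0 ≤ ⟪η • a, zk - zhalf⟫ := by
      have h := ha zhalf hzh
      have e : ⟪a, zk - zhalf⟫ = -⟪a, zhalf - zk⟫ := by
        rw [← inner_neg_right]
        congr 1
        abel
      rw [real_inner_smul_left]
      apply mul_nonneg hη0.le
      rw [e]
      linarith
    have h4 : ⟪(zk - zhalf) - η • F zk, (zk - zhalf) - (zk - znext)⟫ ≤ 0 := by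
      have h := proj_inner_le_aux hconv proj hprojmem hprojmin (zk - η • F zk) hzn
      rw [← hhalf] at h
      have e1 : (zk - zhalf) - η • F zk = (zk - η • F zk) - zhalf := by abel
      have e2 : (zk - zhalf) - (zk - znext) = znext - zhalf := by abel
      rw [e1, e2]
      exact h
    have h5 : ⟪(zk - znext) - η • F zhalf, zk - znext⟫ ≤ 0 := by
      have h := proj_inner_le_aux hconv proj hprojmem hprojmin (zk - η • F zhalf) hzk
      rw [← hnext] at h
      have e1 : (zk - znext) - η • F zhalf = (zk - η • F zhalf) - znext := by abel
      rw [e1]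
      exact h
    have h8 : 0 ≤ ⟪η • F zk - η • F znext, zk - znext⟫ := by
      rw [← smul_sub, real_inner_smul_left]
      exact mul_nonneg hη0.le (hmono zk hzk znext hzn)
    have h12 : ‖η • F zhalf - η • F znext‖ ≤ (η * L) * ‖(zk - znext) - (zk - zhalf)‖ := by
      have e1 : η • F zhalf - η • F znext = η • (F zhalf - F znext) := (smul_sub _ _ _).symm
      have e2 : (zk - znext) - (zk - zhalf) = zhalf - znext := by abel
      rw [e1, e2, norm_smul, Real.norm_eq_abs, abs_of_pos hη0]
      have := hLip zhalf hzh znext hzn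
      nlinarith
    have key := key_ineq_aux (zk - zhalf) (zk - znext) (η • F zk) (η • F zhalf)
      (η • F znext) (η • a) (η * L) ht1 h1 h4 h5 h8 h12
    have eL : η • F znext - η • F zhalf + (zk - znext) = η • (F znext + c) := by
      rw [hcdef, smul_add, smul_smul, mul_inv_cancel₀ hη0.ne', one_smul]
      abel
    have eR : η • F zk + η • a = η • (F zk + a) := (smul_add _ _ _).symm
    rw [eL, eR, norm_smul, norm_smul, Real.norm_eq_abs, abs_of_pos hη0] at key
    exact le_of_mul_le_mul_left key hη0
  -- conclude via sInf manipulations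
  have hbdd : BddBelow ((fun a => ‖F znext + a‖) '' normalCone Z znext) := by
    refine ⟨0, ?_⟩
    rintro r ⟨a, -, rfl⟩
    exact norm_nonneg _
  have step1 : rtan F Z znext ≤ ‖F znext + c‖ := by
    rw [rtan]
    exact csInf_le hbdd ⟨c, hc, rfl⟩
  have hne0 : (0 : EuclideanSpace ℝ (Fin n)) ∈ normalCone Z zk := by
    intro z' hz'
    simp [normalCone]
  have step2 : ‖F znext + c‖ ≤ rtan F Z zk := by
    rw [rtan]
    refine le_csInf ⟨‖F zk + 0‖, ⟨0, hne0, rfl⟩⟩ ?_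
    rintro r ⟨a, ha, rfl⟩
    exact hmain a ha
  exact le_trans step1 step2
end

section
/- Let Z ⊆ ℝⁿ be a nonempty closed convex set, F : Z → ℝⁿ a monotone and L-Lipschitz operator, and z* ∈ Z a solution of the variational inequality. For any T ≥ 1, the T-th iterate z_T of the extragradient algorithm with constant step size η ∈ (0, 1/L) started at z₀ ∈ Z satisfies r^tan_{(F,Z)}(z_T) ≤ (1/√T) · 3‖z₀ − z*‖ / (η√(1 − (ηL)²)); consequently, the natural residual satisfies the same bound: r^nat_{(F,Z)}(z_T) ≤ (1/√T) · 3‖z₀ − z*‖ / (η√(1 − (ηL)²)). -/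
/-!
The extragradient iterates satisfy the energy inequality
`‖z_{k+1} - z*‖² + (1 - (ηL)²)‖z_k - ẑ_k‖² ≤ ‖z_k - z*‖²`, so `∑_k ‖z_k - ẑ_k‖²` is bounded by
`‖z₀ - z*‖² / (1 - (ηL)²)`. The projection defining `z_{k+1}` produces a normal vector
`a_{k+1} ∈ N_Z(z_{k+1})`, and the residual `‖F z_{k+1} + a_{k+1}‖` is at most `3‖z_k - ẑ_k‖ / η`.
Monotonicity of `F` makes this residual nonincreasing along the iteration, so its last value
is controlled by the average of the previous ones, which gives the `1/√T` rate. Both the tangent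
residual and the natural residual at `z_T` are bounded by `‖F z_T + a_T‖`.
-/

open scoped RealInnerProductSpace

section NormalCone

variable {E : Type*} [NormedAddCommGroup E] [InnerProductSpace ℝ E] {Z : Set E}

theorem smul_mem_normalCone {z a : E} (ha : a ∈ normalCone Z z) {c : ℝ} (hc : 0 ≤ c) :
    c • a ∈ normalCone Z z := fun y hy => by
  rw [real_inner_smul_left]
  exact mul_nonpos_of_nonneg_of_nonpos hc (ha y hy)

theorem sub_mem_normalCone_of_forall_norm_le (hZ : Convex ℝ Z) {x p : E} (hp : p ∈ Z)
    (hmin : ∀ y ∈ Z, ‖x - p‖ ≤ ‖x - y‖) : x - p ∈ normalCone Z p := by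
  have : Nonempty Z := ⟨⟨p, hp⟩⟩
  refine (norm_eq_iInf_iff_real_inner_le_zero hZ hp).1 (le_antisymm ?_ ?_)
  · exact le_ciInf fun y => hmin y y.2
  · exact ciInf_le ⟨0, Set.forall_mem_range.2 fun _ => norm_nonneg _⟩ (⟨p, hp⟩ : Z)

/-- Nonexpansiveness of the projection onto `Z`, in variational form. -/
theorem norm_sub_le_of_sub_mem_normalCone {p q u v : E} (hp : p ∈ Z) (hq : q ∈ Z)
    (hu : u - p ∈ normalCone Z p) (hv : v - q ∈ normalCone Z q) : ‖p - q‖ ≤ ‖u - v‖ := by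
  have hsq : ‖p - q‖ ^ 2 ≤ ⟪u - v, p - q⟫ := by
    have key : ⟪u - v, p - q⟫ - ‖p - q‖ ^ 2 = -⟪u - p, q - p⟫ - ⟪v - q, p - q⟫ := by
      simp only [← real_inner_self_eq_norm_sq, inner_sub_left, inner_sub_right,
        real_inner_comm]
      ring
    linarith [hu q hq, hv p hp]
  have hcs := real_inner_le_norm (u - v) (p - q)
  nlinarith [norm_nonneg (p - q), norm_nonneg (u - v)]

/-- With `p = Π_Z (x - v)`, the natural residual `‖x - p‖` is at most `‖v + a‖` for every
`a ∈ N_Z(x)`. -/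
theorem norm_sub_le_norm_add_of_mem_normalCone {x p v a : E} (hx : x ∈ Z) (hp : p ∈ Z)
    (ha : a ∈ normalCone Z x) (hpv : x - v - p ∈ normalCone Z p) : ‖x - p‖ ≤ ‖v + a‖ := by
  have hxa : x + a - x ∈ normalCone Z x := by rwa [add_sub_cancel_left]
  calc ‖x - p‖ ≤ ‖x + a - (x - v)‖ := norm_sub_le_of_sub_mem_normalCone hx hp hxa hpv
    _ = ‖v + a‖ := by rw [add_sub_sub_cancel, add_comm]

theorem rtan_le_of_mem_normalCone (F : E → E) {z a : E} (ha : a ∈ normalCone Z z) :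
    rtan F Z z ≤ ‖F z + a‖ :=
  csInf_le ⟨0, by rintro _ ⟨b, -, rfl⟩; exact norm_nonneg _⟩ ⟨a, ha, rfl⟩

end NormalCone

section ExtragradientStep

variable {E : Type*} [NormedAddCommGroup E] [InnerProductSpace ℝ E] {Z : Set E} {F : E → E}
  {η L : ℝ} {x xh xn : E}

theorem eg_energy_le {zs : E} (hη : 0 ≤ η) (hLip : ‖F x - F xh‖ ≤ L * ‖x - xh‖)
    (hsol : 0 ≤ ⟪F xh, xh - zs⟫) (hxn : xn ∈ Z) (hzs : zs ∈ Z)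
    (hxh : x - η • F x - xh ∈ normalCone Z xh) (hxn' : x - η • F xh - xn ∈ normalCone Z xn) :
    ‖xn - zs‖ ^ 2 + (1 - (η * L) ^ 2) * ‖x - xh‖ ^ 2 ≤ ‖x - zs‖ ^ 2 := by
  have identity : ‖xn - zs‖ ^ 2 = ‖x - zs‖ ^ 2 - ‖x - xh‖ ^ 2 - ‖xn - xh‖ ^ 2
      + 2 * ⟪x - η • F xh - xn, zs - xn⟫ + 2 * ⟪x - η • F x - xh, xn - xh⟫
      + 2 * η * ⟪F x - F xh, xn - xh⟫ - 2 * η * ⟪F xh, xh - zs⟫ := by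
    simp only [← real_inner_self_eq_norm_sq, inner_sub_left, inner_sub_right,
      real_inner_smul_left]
    simp only [real_inner_comm]
    ring
  have hcross : η * ⟪F x - F xh, xn - xh⟫ ≤ η * (L * ‖x - xh‖ * ‖xn - xh‖) := by
    gcongr
    exact (real_inner_le_norm _ _).trans (by gcongr)
  nlinarith [hxn' zs hzs, hxh xn hxn, mul_nonneg hη hsol,
    sq_nonneg (η * L * ‖x - xh‖ - ‖xn - xh‖)]

theorem eg_norm_sub_le (hη : 0 ≤ η) (hLip : ‖F x - F xh‖ ≤ L * ‖x - xh‖) (hxh : xh ∈ Z)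
    (hxn : xn ∈ Z) (hxh' : x - η • F x - xh ∈ normalCone Z xh)
    (hxn' : x - η • F xh - xn ∈ normalCone Z xn) : ‖xn - xh‖ ≤ η * L * ‖x - xh‖ :=
  calc ‖xn - xh‖ ≤ ‖x - η • F xh - (x - η • F x)‖ :=
        norm_sub_le_of_sub_mem_normalCone hxn hxh hxn' hxh'
    _ = η * ‖F x - F xh‖ := by
        rw [sub_sub_sub_cancel_left, ← smul_sub, norm_smul, Real.norm_of_nonneg hη]
    _ ≤ η * L * ‖x - xh‖ := by rw [mul_assoc]; gcongr

theorem eg_scaled_residual_le (hη : 0 ≤ η) (hηL : η * L ≤ 1)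
    (hLip : ‖F x - F xh‖ ≤ L * ‖x - xh‖) (hLip' : ‖F xn - F xh‖ ≤ L * ‖xn - xh‖)
    (hxh : xh ∈ Z) (hxn : xn ∈ Z) (hxh' : x - η • F x - xh ∈ normalCone Z xh)
    (hxn' : x - η • F xh - xn ∈ normalCone Z xn) :
    ‖η • F xn + (x - η • F xh - xn)‖ ≤ 3 * ‖x - xh‖ := by
  have hstep := eg_norm_sub_le hη hLip hxh hxn hxh' hxn'
  have hF : ‖η • (F xn - F xh)‖ ≤ ‖xn - xh‖ := by
    rw [norm_smul, Real.norm_of_nonneg hη]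
    calc η * ‖F xn - F xh‖ ≤ η * L * ‖xn - xh‖ := by rw [mul_assoc]; gcongr
      _ ≤ ‖xn - xh‖ := mul_le_of_le_one_left (norm_nonneg _) hηL
  calc ‖η • F xn + (x - η • F xh - xn)‖ = ‖(x - xh) - (xn - xh) + η • (F xn - F xh)‖ := by
        rw [smul_sub]; congr 1; abel
    _ ≤ ‖x - xh‖ + ‖xn - xh‖ + ‖xn - xh‖ := (norm_add_le_of_le (norm_sub_le _ _) hF)
    _ ≤ 3 * ‖x - xh‖ := by nlinarith [norm_nonneg (x - xh)]

/-- The extragradient step does not increase the (scaled) residual `‖η F x + b‖`,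
`b ∈ N_Z(x)`: the new one is realized by the normal vector `x - η F xh - xn ∈ N_Z(xn)`. -/
theorem eg_scaled_residual_le_of_mem_normalCone {b : E} (hη : 0 ≤ η) (hηL : η * L ≤ 1)
    (hmono : 0 ≤ ⟪F x - F xn, x - xn⟫) (hLip : ‖F xh - F xn‖ ≤ L * ‖xh - xn‖)
    (hx : x ∈ Z) (hxh : xh ∈ Z) (hxn : xn ∈ Z) (hb : b ∈ normalCone Z x)
    (hxh' : x - η • F x - xh ∈ normalCone Z xh) (hxn' : x - η • F xh - xn ∈ normalCone Z xn) :
    ‖η • F xn + (x - η • F xh - xn)‖ ≤ ‖η • F x + b‖ := by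
  -- every term on the right-hand side is nonnegative
  have identity : ‖η • F x + b‖ ^ 2 - ‖η • F xn + (x - η • F xh - xn)‖ ^ 2 =
      -2 * ⟪x - η • F xh - xn, x - xn⟫ + 2 * η * ⟪F x - F xn, x - xn⟫
      - 2 * ⟪x - η • F x - xh, xn - xh⟫ - 2 * ⟪b, xh - x⟫
      + (‖xh - xn‖ ^ 2 - ‖η • (F xh - F xn)‖ ^ 2) + ‖x - xh - η • F x - b‖ ^ 2 := by
    simp only [← real_inner_self_eq_norm_sq, inner_sub_left, inner_sub_right,
      inner_add_left, inner_add_right, real_inner_smul_left, real_inner_smul_right]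
    simp only [real_inner_comm]
    ring
  have hF : ‖η • (F xh - F xn)‖ ≤ ‖xh - xn‖ := by
    rw [norm_smul, Real.norm_of_nonneg hη]
    calc η * ‖F xh - F xn‖ ≤ η * L * ‖xh - xn‖ := by rw [mul_assoc]; gcongr
      _ ≤ ‖xh - xn‖ := mul_le_of_le_one_left (norm_nonneg _) hηL
  have hF2 : ‖η • (F xh - F xn)‖ ^ 2 ≤ ‖xh - xn‖ ^ 2 := by gcongr
  have hsq : ‖η • F xn + (x - η • F xh - xn)‖ ^ 2 ≤ ‖η • F x + b‖ ^ 2 := by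
    nlinarith [hxn' x hx, hxh' xn hxn, hb xh hxh, mul_nonneg hη hmono,
      sq_nonneg ‖x - xh - η • F x - b‖]
  exact pow_le_pow_iff_left₀ (norm_nonneg _) (norm_nonneg _) two_ne_zero |>.1 hsq

end ExtragradientStep

theorem mul_sq_le_sum_sq_of_antitone {f g : ℕ → ℝ} (hf : Antitone f) (hf0 : ∀ k, 0 ≤ f k)
    (hfg : ∀ k, f k ≤ g k) (m : ℕ) :
    (m + 1) * f m ^ 2 ≤ ∑ k ∈ Finset.range (m + 1), g k ^ 2 := by
  have hle : ∀ k ∈ Finset.range (m + 1), f m ^ 2 ≤ g k ^ 2 := fun k hk => by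
    have hkm : k ≤ m := Nat.lt_succ_iff.1 (Finset.mem_range.1 hk)
    gcongr
    · exact hf0 m
    · exact (hf hkm).trans (hfg k)
  simpa using Finset.card_nsmul_le_sum _ _ _ hle

theorem le_one_div_sqrt_mul_of_mul_sq_le {T R B : ℝ} (hT : 0 < T) (hB : 0 ≤ B)
    (h : T * R ^ 2 ≤ B ^ 2) : R ≤ 1 / Real.sqrt T * B := by
  rw [one_div_mul_eq_div, le_div_iff₀ (Real.sqrt_pos.2 hT)]
  calc R * Real.sqrt T ≤ |R| * Real.sqrt T := by gcongr; exact le_abs_self R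
    _ = Real.sqrt (T * R ^ 2) := by
        rw [Real.sqrt_mul hT.le, Real.sqrt_sq_eq_abs, mul_comm]
    _ ≤ Real.sqrt (B ^ 2) := Real.sqrt_le_sqrt h
    _ = B := Real.sqrt_sq hB

theorem inner_apply_sub_nonneg_of_solution {E : Type*} [NormedAddCommGroup E]
    [InnerProductSpace ℝ E] {Z : Set E} {F : E → E}
    (hmono : ∀ x ∈ Z, ∀ y ∈ Z, 0 ≤ ⟪F x - F y, x - y⟫) {zs : E} (hzs : zs ∈ Z)
    (hsol : ∀ y ∈ Z, ⟪F zs, zs - y⟫ ≤ 0) (y : E) (hy : y ∈ Z) : 0 ≤ ⟪F y, y - zs⟫ := by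
  have hmono' := hmono y hy zs hzs
  have hsol' := hsol y hy
  rw [inner_sub_left] at hmono'
  rw [← neg_sub, inner_neg_right] at hsol'
  linarith

section ExtragradientRun

variable {E : Type*} [NormedAddCommGroup E] [InnerProductSpace ℝ E]

/-- `zh k` and `z (k + 1)` are the projections onto `Z` of `z k - η F (z k)` and
`z k - η F (zh k)`, each characterized by its variational inequality. -/
structure IsExtragradientRun (Z : Set E) (F : E → E) (η : ℝ) (z zh : ℕ → E) : Prop where
  mem : ∀ k, z k ∈ Z
  mem_half : ∀ k, zh k ∈ Z
  normal_half : ∀ k, z k - η • F (z k) - zh k ∈ normalCone Z (zh k)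
  normal : ∀ k, z k - η • F (zh k) - z (k + 1) ∈ normalCone Z (z (k + 1))

namespace IsExtragradientRun

variable {Z : Set E} {F : E → E} {η L : ℝ} {z zh : ℕ → E}

theorem of_proj (hZ : Convex ℝ Z) {proj : E → E} (hprojmem : ∀ x, proj x ∈ Z)
    (hprojmin : ∀ x, ∀ y ∈ Z, ‖x - proj x‖ ≤ ‖x - y‖) (hz0 : z 0 ∈ Z)
    (hzh : ∀ k, zh k = proj (z k - η • F (z k)))
    (hz : ∀ k, z (k + 1) = proj (z k - η • F (zh k))) : IsExtragradientRun Z F η z zh where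
  mem
    | 0 => hz0
    | k + 1 => hz k ▸ hprojmem _
  mem_half k := hzh k ▸ hprojmem _
  normal_half k := hzh k ▸ sub_mem_normalCone_of_forall_norm_le hZ (hprojmem _) (hprojmin _)
  normal k := hz k ▸ sub_mem_normalCone_of_forall_norm_le hZ (hprojmem _) (hprojmin _)

theorem smul_normal_mem (h : IsExtragradientRun Z F η z zh) (hη : 0 ≤ η) (k : ℕ) :
    η⁻¹ • (z k - η • F (zh k) - z (k + 1)) ∈ normalCone Z (z (k + 1)) :=
  smul_mem_normalCone (h.normal k) (inv_nonneg.2 hη)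

theorem sum_sq_le (h : IsExtragradientRun Z F η z zh) (hη : 0 ≤ η)
    (hLip : ∀ x ∈ Z, ∀ y ∈ Z, ‖F x - F y‖ ≤ L * ‖x - y‖) {zs : E} (hzs : zs ∈ Z)
    (hsol : ∀ y ∈ Z, 0 ≤ ⟪F y, y - zs⟫) (m : ℕ) :
    (1 - (η * L) ^ 2) * ∑ k ∈ Finset.range m, ‖z k - zh k‖ ^ 2 ≤ ‖z 0 - zs‖ ^ 2 := by
  suffices (1 - (η * L) ^ 2) * ∑ k ∈ Finset.range m, ‖z k - zh k‖ ^ 2 + ‖z m - zs‖ ^ 2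
      ≤ ‖z 0 - zs‖ ^ 2 by nlinarith [sq_nonneg ‖z m - zs‖]
  induction m with
  | zero => simp
  | succ m ih =>
    have := eg_energy_le hη (hLip _ (h.mem m) _ (h.mem_half m)) (hsol _ (h.mem_half m))
      (h.mem (m + 1)) hzs (h.normal_half m) (h.normal m)
    rw [Finset.sum_range_succ]
    linarith

theorem scaled_residual_le (h : IsExtragradientRun Z F η z zh) (hη : 0 ≤ η)
    (hηL : η * L ≤ 1) (hLip : ∀ x ∈ Z, ∀ y ∈ Z, ‖F x - F y‖ ≤ L * ‖x - y‖) (k : ℕ) :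
    ‖η • F (z (k + 1)) + (z k - η • F (zh k) - z (k + 1))‖ ≤ 3 * ‖z k - zh k‖ :=
  eg_scaled_residual_le hη hηL (hLip _ (h.mem k) _ (h.mem_half k))
    (hLip _ (h.mem (k + 1)) _ (h.mem_half k)) (h.mem_half k) (h.mem (k + 1))
    (h.normal_half k) (h.normal k)

theorem antitone_scaled_residual (h : IsExtragradientRun Z F η z zh) (hη : 0 ≤ η)
    (hηL : η * L ≤ 1) (hmono : ∀ x ∈ Z, ∀ y ∈ Z, 0 ≤ ⟪F x - F y, x - y⟫)
    (hLip : ∀ x ∈ Z, ∀ y ∈ Z, ‖F x - F y‖ ≤ L * ‖x - y‖) :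
    Antitone fun k => ‖η • F (z (k + 1)) + (z k - η • F (zh k) - z (k + 1))‖ :=
  antitone_nat_of_succ_le fun k =>
    eg_scaled_residual_le_of_mem_normalCone hη hηL (hmono _ (h.mem _) _ (h.mem _))
      (hLip _ (h.mem_half _) _ (h.mem _)) (h.mem _) (h.mem_half _) (h.mem _) (h.normal k)
      (h.normal_half _) (h.normal _)

theorem residual_le (h : IsExtragradientRun Z F η z zh) (hη : 0 < η) (hL : 0 ≤ L)
    (hηL : η * L < 1) (hmono : ∀ x ∈ Z, ∀ y ∈ Z, 0 ≤ ⟪F x - F y, x - y⟫)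
    (hLip : ∀ x ∈ Z, ∀ y ∈ Z, ‖F x - F y‖ ≤ L * ‖x - y‖) {zs : E} (hzs : zs ∈ Z)
    (hsol : ∀ y ∈ Z, ⟪F zs, zs - y⟫ ≤ 0) (m : ℕ) :
    ‖F (z (m + 1)) + η⁻¹ • (z m - η • F (zh m) - z (m + 1))‖ ≤
      1 / Real.sqrt ((m + 1 : ℕ) : ℝ) *
        (3 * ‖z 0 - zs‖ / (η * Real.sqrt (1 - (η * L) ^ 2))) := by
  set S := fun k => ‖η • F (z (k + 1)) + (z k - η • F (zh k) - z (k + 1))‖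
  have hs : 0 < 1 - (η * L) ^ 2 := by nlinarith [mul_nonneg hη.le hL]
  have hR : ‖F (z (m + 1)) + η⁻¹ • (z m - η • F (zh m) - z (m + 1))‖ = S m / η := by
    rw [← inv_smul_smul₀ hη.ne' (F (z (m + 1))), ← smul_add, norm_smul,
      Real.norm_of_nonneg (inv_nonneg.2 hη.le), inv_mul_eq_div]
  have hsum := h.sum_sq_le hη.le hLip hzs (inner_apply_sub_nonneg_of_solution hmono hzs hsol)
    (m + 1)
  have hS := mul_sq_le_sum_sq_of_antitone (h.antitone_scaled_residual hη.le hηL.le hmono hLip)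
    (fun _ => norm_nonneg _) (h.scaled_residual_le hη.le hηL.le hLip) m
  simp only [mul_pow, ← Finset.mul_sum] at hS
  have hS' : ((m + 1 : ℕ) : ℝ) * S m ^ 2 ≤ 9 * ‖z 0 - zs‖ ^ 2 / (1 - (η * L) ^ 2) := by
    rw [le_div_iff₀ hs]
    push_cast
    nlinarith
  refine le_one_div_sqrt_mul_of_mul_sq_le (by positivity) (by positivity) ?_
  calc ((m + 1 : ℕ) : ℝ) * ‖F (z (m + 1)) + η⁻¹ • (z m - η • F (zh m) - z (m + 1))‖ ^ 2
      = ((m + 1 : ℕ) : ℝ) * S m ^ 2 / η ^ 2 := by rw [hR]; ring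
    _ ≤ 9 * ‖z 0 - zs‖ ^ 2 / (1 - (η * L) ^ 2) / η ^ 2 := by gcongr
    _ = (3 * ‖z 0 - zs‖ / (η * Real.sqrt (1 - (η * L) ^ 2))) ^ 2 := by
      rw [div_pow, mul_pow 3, mul_pow η (Real.sqrt _), Real.sq_sqrt hs.le, div_div,
        mul_comm _ (η ^ 2)]
      norm_num

end IsExtragradientRun

end ExtragradientRun

theorem eg_last_iterate_residuals_general {n : ℕ}
    (Z : Set (EuclideanSpace ℝ (Fin n)))
    (hconv : Convex ℝ Z)
    (F : EuclideanSpace ℝ (Fin n) → EuclideanSpace ℝ (Fin n)) (L : ℝ)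
    (hmono : ∀ z ∈ Z, ∀ z' ∈ Z, 0 ≤ ⟪F z - F z', z - z'⟫)
    (hLip : ∀ z ∈ Z, ∀ z' ∈ Z, ‖F z - F z'‖ ≤ L * ‖z - z'‖)
    (η : ℝ) (hη0 : 0 < η) (hη1 : η < 1 / L)
    (proj : EuclideanSpace ℝ (Fin n) → EuclideanSpace ℝ (Fin n))
    (hprojmem : ∀ x, proj x ∈ Z)
    (hprojmin : ∀ x, ∀ y ∈ Z, ‖x - proj x‖ ≤ ‖x - y‖)
    (zs : EuclideanSpace ℝ (Fin n)) (hzs : zs ∈ Z)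
    (hsol : ∀ z ∈ Z, ⟪F zs, zs - z⟫ ≤ 0)
    (z zh : ℕ → EuclideanSpace ℝ (Fin n)) (hz0 : z 0 ∈ Z)
    (hzh : ∀ k, zh k = proj (z k - η • F (z k)))
    (hziter : ∀ k, z (k + 1) = proj (z k - η • F (zh k)))
    (T : ℕ) (hT : 1 ≤ T) :
    rtan F Z (z T) ≤
        (1 / Real.sqrt T) * (3 * ‖z 0 - zs‖ / (η * Real.sqrt (1 - (η * L) ^ 2))) ∧
      ‖z T - proj (z T - F (z T))‖ ≤
        (1 / Real.sqrt T) * (3 * ‖z 0 - zs‖ / (η * Real.sqrt (1 - (η * L) ^ 2))) := by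
  have hL : 0 < L := one_div_pos.1 (hη0.trans hη1)
  have hηL : η * L < 1 := by rwa [← lt_div_iff₀ hL]
  have hrun := IsExtragradientRun.of_proj hconv hprojmem hprojmin hz0 hzh hziter
  obtain ⟨m, rfl⟩ : ∃ m, T = m + 1 := ⟨T - 1, by omega⟩
  have hbound := hrun.residual_le hη0 hL.le hηL hmono hLip hzs hsol m
  have hnormal := hrun.smul_normal_mem hη0.le m
  refine ⟨(rtan_le_of_mem_normalCone F hnormal).trans hbound, le_trans ?_ hbound⟩
  exact norm_sub_le_norm_add_of_mem_normalCone (hrun.mem _) (hprojmem _) hnormal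
    (sub_mem_normalCone_of_forall_norm_le hconv (hprojmem _) (hprojmin _))

/-- Last-iterate convergence of the extragradient algorithm in tangent residual and
natural residual: for a monotone `L`-Lipschitz operator `F` on a nonempty closed convex
`Z ⊆ ℝⁿ`, a solution `z*` of the VI, step size `η ∈ (0, 1/L)` and any `T ≥ 1`, the `T`-th
EG iterate satisfies `r^tan_{(F,Z)}(z_T) ≤ 3‖z₀ - z*‖/(√T · η√(1-(ηL)²))` and the natural
residual `r^nat_{(F,Z)}(z_T) = ‖z_T - Π_Z(z_T - F z_T)‖` satisfies the same bound. -/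
theorem eg_last_iterate_residuals {n : ℕ}
    (Z : Set (EuclideanSpace ℝ (Fin n))) (hne : Z.Nonempty) (hcl : IsClosed Z)
    (hconv : Convex ℝ Z)
    (F : EuclideanSpace ℝ (Fin n) → EuclideanSpace ℝ (Fin n)) (L : ℝ)
    (hmono : ∀ z ∈ Z, ∀ z' ∈ Z, 0 ≤ ⟪F z - F z', z - z'⟫)
    (hLip : ∀ z ∈ Z, ∀ z' ∈ Z, ‖F z - F z'‖ ≤ L * ‖z - z'‖)
    (η : ℝ) (hL : 0 < L) (hη0 : 0 < η) (hη1 : η < 1 / L)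
    (proj : EuclideanSpace ℝ (Fin n) → EuclideanSpace ℝ (Fin n))
    (hprojmem : ∀ x, proj x ∈ Z)
    (hprojmin : ∀ x, ∀ y ∈ Z, ‖x - proj x‖ ≤ ‖x - y‖)
    (zs : EuclideanSpace ℝ (Fin n)) (hzs : zs ∈ Z)
    (hsol : ∀ z ∈ Z, ⟪F zs, zs - z⟫ ≤ 0)
    (z zh : ℕ → EuclideanSpace ℝ (Fin n)) (hz0 : z 0 ∈ Z)
    (hzh : ∀ k, zh k = proj (z k - η • F (z k)))
    (hziter : ∀ k, z (k + 1) = proj (z k - η • F (zh k)))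
    (T : ℕ) (hT : 1 ≤ T) :
    rtan F Z (z T) ≤
        (1 / Real.sqrt T) * (3 * ‖z 0 - zs‖ / (η * Real.sqrt (1 - (η * L) ^ 2))) ∧
      ‖z T - proj (z T - F (z T))‖ ≤
        (1 / Real.sqrt T) * (3 * ‖z 0 - zs‖ / (η * Real.sqrt (1 - (η * L) ^ 2))) :=
  eg_last_iterate_residuals_general Z hconv F L hmono hLip η hη0 hη1 proj hprojmem hprojmin zs hzs
    hsol z zh hz0 hzh hziter T hT
end

section
/- Let Z ⊆ ℝⁿ be a nonempty closed convex set, F : Z → ℝⁿ an operator, and z ∈ Z. Let N_Z(z) be the normal cone of Z at z, N̂_Z(z) = {v ∈ N_Z(z) : ‖v‖ ≤ 1} its intersection with the unit ball, and T_Z(z) = {z′ ∈ ℝⁿ : ⟨z′, a⟩ ≤ 0 for all a ∈ N_Z(z)} the tangent cone (the polar cone of N_Z(z)). Then the following six quantities are all equal: (1) √(‖F(z)‖² − max{⟨F(z), a⟩² : a ∈ N̂_Z(z), ⟨F(z), a⟩ ≤ 0}); (2) min{‖F(z) − ⟨F(z), a⟩·a‖ : a ∈ N̂_Z(z), ⟨F(z),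 a⟩ ≤ 0}; (3) ‖Π_{T_Z(z)}(−F(z))‖; (4) ‖Π_{z + T_Z(z)}(z − F(z)) − z‖; (5) ‖−F(z) − Π_{N_Z(z)}(−F(z))‖; (6) min{‖F(z) + a‖ : a ∈ N_Z(z)}. -/
set_option maxHeartbeats 1000000


open scoped RealInnerProductSpace

section Aux

variable {E : Type*} [NormedAddCommGroup E] [InnerProductSpace ℝ E]

/-- Variational inequality from minimality of distance over a convex set. -/
lemma proj_var_ineq {K : Set E} (hK : Convex ℝ K) {u v : E} (hv : v ∈ K)
    (hmin : ∀ w ∈ K, ‖u - v‖ ≤ ‖u - w‖) : ∀ w ∈ K, ⟪u - v, w - v⟫ ≤ 0 := by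
  haveI : Nonempty K := ⟨⟨v, hv⟩⟩
  have hEq : ‖u - v‖ = ⨅ w : K, ‖u - w‖ := by
    refine le_antisymm (le_ciInf fun w => hmin w w.2) ?_
    have hbdd : BddBelow (Set.range fun w : K => ‖u - w‖) :=
      ⟨0, by rintro x ⟨w, rfl⟩; exact norm_nonneg _⟩
    exact ciInf_le hbdd ⟨v, hv⟩
  exact (norm_eq_iInf_iff_real_inner_le_zero hK hv).mp hEq

/-- Uniqueness of the minimizer of the distance over a convex set. -/
lemma proj_unique {K : Set E} (hK : Convex ℝ K) {u v₁ v₂ : E} (h₁ : v₁ ∈ K) (h₂ : v₂ ∈ K)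
    (m₁ : ∀ w ∈ K, ‖u - v₁‖ ≤ ‖u - w‖) (m₂ : ∀ w ∈ K, ‖u - v₂‖ ≤ ‖u - w‖) : v₁ = v₂ := by
  have i₁ := proj_var_ineq hK h₁ m₁ v₂ h₂
  have i₂ := proj_var_ineq hK h₂ m₂ v₁ h₁
  have key : ⟪u - v₁, v₂ - v₁⟫ + ⟪u - v₂, v₁ - v₂⟫ = ‖v₂ - v₁‖ ^ 2 := by
    rw [show v₁ - v₂ = -(v₂ - v₁) from by abel, inner_neg_right, ← sub_eq_add_neg,
      ← inner_sub_left, show (u - v₁) - (u - v₂) = v₂ - v₁ from by abel,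
      real_inner_self_eq_norm_sq]
  have hz : ‖v₂ - v₁‖ = 0 := by nlinarith [norm_nonneg (v₂ - v₁)]
  have := norm_eq_zero.mp hz
  exact (sub_eq_zero.mp this).symm

end Aux

/-- Equivalent formulations of the tangent residual.  For a nonempty closed convex set
`Z ⊆ ℝⁿ`, an operator `F` and `z ∈ Z`, with `N` the normal cone of `Z` at `z`, `T` the
tangent cone (the polar cone of `N`), and Euclidean projections onto `T`, `z + T` and `N`
(characterized by their defining property), the following six quantities are all equal:
(1) `√(‖F z‖² - max{⟨F z, a⟩² : a ∈ N, ‖a‖ ≤ 1, ⟨F z, a⟩ ≤ 0})`;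
(2) `min{‖F z - ⟨F z, a⟩ a‖ : a ∈ N, ‖a‖ ≤ 1, ⟨F z, a⟩ ≤ 0}`;
(3) `‖Π_T(-F z)‖`; (4) `‖Π_{z+T}(z - F z) - z‖`; (5) `‖-F z - Π_N(-F z)‖`;
(6) `min{‖F z + a‖ : a ∈ N}`. -/
theorem tangent_residual_equivalent_forms {n : ℕ}
    (Z : Set (EuclideanSpace ℝ (Fin n))) (hne : Z.Nonempty) (hcl : IsClosed Z)
    (hconv : Convex ℝ Z)
    (F : EuclideanSpace ℝ (Fin n) → EuclideanSpace ℝ (Fin n))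
    (z : EuclideanSpace ℝ (Fin n)) (hz : z ∈ Z)
    (N : Set (EuclideanSpace ℝ (Fin n)))
    (hN : N = {v | ∀ z' ∈ Z, ⟪v, z' - z⟫ ≤ 0})
    (T : Set (EuclideanSpace ℝ (Fin n)))
    (hT : T = {w | ∀ a ∈ N, ⟪w, a⟫ ≤ 0})
    (projT projJ projN : EuclideanSpace ℝ (Fin n) → EuclideanSpace ℝ (Fin n))
    (hprojT : ∀ u, projT u ∈ T ∧ ∀ w ∈ T, ‖u - projT u‖ ≤ ‖u - w‖)
    (hprojJ : ∀ u, projJ u ∈ (fun w => z + w) '' T ∧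
      ∀ w ∈ (fun w => z + w) '' T, ‖u - projJ u‖ ≤ ‖u - w‖)
    (hprojN : ∀ u, projN u ∈ N ∧ ∀ w ∈ N, ‖u - projN u‖ ≤ ‖u - w‖) :
    Real.sqrt (‖F z‖ ^ 2 -
        sSup ((fun a => ⟪F z, a⟫ ^ 2) '' {a | a ∈ N ∧ ‖a‖ ≤ 1 ∧ ⟪F z, a⟫ ≤ 0}))
      = sInf ((fun a => ‖F z - ⟪F z, a⟫ • a‖) '' {a | a ∈ N ∧ ‖a‖ ≤ 1 ∧ ⟪F z, a⟫ ≤ 0}) ∧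
    sInf ((fun a => ‖F z - ⟪F z, a⟫ • a‖) '' {a | a ∈ N ∧ ‖a‖ ≤ 1 ∧ ⟪F z, a⟫ ≤ 0})
      = ‖projT (-F z)‖ ∧
    ‖projT (-F z)‖ = ‖projJ (z - F z) - z‖ ∧
    ‖projJ (z - F z) - z‖ = ‖-F z - projN (-F z)‖ ∧
    ‖-F z - projN (-F z)‖ = sInf ((fun a => ‖F z + a‖) '' N) := by
  classical
  set g := F z with hg
  set p := projT (-g) with hp
  set q := projN (-g) with hq
  set S : Set (EuclideanSpace ℝ (Fin n)) := {a | a ∈ N ∧ ‖a‖ ≤ 1 ∧ ⟪g, a⟫ ≤ 0} with hS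
  -- basic cone facts
  have hNconv : Convex ℝ N := by
    rw [hN]
    intro a ha b hb s t hs ht hst z' hz'
    have ha' := ha z' hz'
    have hb' := hb z' hz'
    rw [inner_add_left, real_inner_smul_left, real_inner_smul_left]
    nlinarith
  have hTconv : Convex ℝ T := by
    rw [hT]
    intro a ha b hb s t hs ht hst v hv
    have ha' := ha v hv
    have hb' := hb v hv
    rw [inner_add_left, real_inner_smul_left, real_inner_smul_left]
    nlinarith
  have h0N : (0 : EuclideanSpace ℝ (Fin n)) ∈ N := by
    rw [hN]; intro z' _; simp
  have hNsmul : ∀ c : ℝ, 0 ≤ c → ∀ a ∈ N, c • a ∈ N := by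
    intro c hc a ha
    rw [hN] at ha ⊢
    intro z' hz'
    rw [real_inner_smul_left]
    exact mul_nonpos_of_nonneg_of_nonpos hc (ha z' hz')
  have hpT : p ∈ T := (hprojT (-g)).1
  have hqN : q ∈ N := (hprojN (-g)).1
  have hpmin : ∀ w ∈ T, ‖-g - p‖ ≤ ‖-g - w‖ := (hprojT (-g)).2
  have hqmin : ∀ a ∈ N, ‖-g - q‖ ≤ ‖-g - a‖ := (hprojN (-g)).2
  -- variational inequality for q, and orthogonality
  have hqvar : ∀ a ∈ N, ⟪-g - q, a - q⟫ ≤ 0 := proj_var_ineq hNconv hqN hqmin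
  have hqorth : ⟪-g - q, q⟫ = 0 := by
    have h1 : ⟪-g - q, (0 : EuclideanSpace ℝ (Fin n)) - q⟫ ≤ 0 := hqvar 0 h0N
    have h2 : ⟪-g - q, (2 : ℝ) • q - q⟫ ≤ 0 := hqvar _ (hNsmul 2 (by norm_num) q hqN)
    rw [show ((0 : EuclideanSpace ℝ (Fin n)) - q) = -q from by abel, inner_neg_right] at h1
    rw [show ((2 : ℝ) • q - q) = q from by rw [two_smul]; abel] at h2
    linarith
  -- -g - q lies in T
  have hgqT : -g - q ∈ T := by
    rw [hT]
    intro a ha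
    have h := hqvar a ha
    rw [inner_sub_right, hqorth] at h
    linarith
  -- -g - q is a minimizer over T, hence equals p (Moreau decomposition)
  have hgqmin : ∀ w ∈ T, ‖-g - (-g - q)‖ ≤ ‖-g - w‖ := by
    intro w hw
    rw [show -g - (-g - q) = q from by abel]
    have hwq : ⟪w, q⟫ ≤ 0 := by rw [hT] at hw; exact hw q hqN
    have expand : ‖-g - w‖ ^ 2 = ‖q‖ ^ 2 + 2 * ⟪q, (-g - q) - w⟫ + ‖(-g - q) - w‖ ^ 2 := by
      rw [show -g - w = q + ((-g - q) - w) from by abel, norm_add_sq_real]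
    have hiq : 0 ≤ ⟪q, (-g - q) - w⟫ := by
      rw [inner_sub_right, show ⟪q, -g - q⟫ = 0 from by rw [real_inner_comm]; exact hqorth]
      rw [real_inner_comm] at hwq
      linarith
    nlinarith [sq_nonneg ‖(-g - q) - w‖, norm_nonneg q, norm_nonneg (-g - w)]
  have hmoreau : p = -g - q := proj_unique hTconv hpT hgqT hpmin hgqmin
  have hsum : g + q = -p := by rw [hmoreau]; abel
  have horth : ⟪p, q⟫ = 0 := by rw [hmoreau]; exact hqorth
  have hpyth : ‖g‖ ^ 2 = ‖p‖ ^ 2 + ‖q‖ ^ 2 := by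
    have e : g = -(p + q) := by rw [hmoreau]; abel
    rw [e, norm_neg, norm_add_sq_real, horth]; ring
  -- key inequality: ‖p‖ ≤ ‖g + a‖ for all a ∈ N
  have hkey : ∀ a ∈ N, ‖p‖ ≤ ‖g + a‖ := by
    intro a ha
    have h := hqmin a ha
    rw [show -g - q = -(g + q) from by abel, norm_neg, show -g - a = -(g + a) from by abel,
      norm_neg, hsum, norm_neg] at h
    exact h
  have hgqnorm : ‖g + q‖ = ‖p‖ := by rw [hsum, norm_neg]
  -- the maximizer a* = ‖q‖⁻¹ • q
  set a₀ : EuclideanSpace ℝ (Fin n) := ‖q‖⁻¹ • q with ha₀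
  have hgq : ⟪g, q⟫ = -‖q‖ ^ 2 := by
    have : ⟪g + q, q⟫ = ⟪-p, q⟫ := by rw [hsum]
    rw [inner_add_left, inner_neg_left, horth, real_inner_self_eq_norm_sq] at this
    linarith
  have ha₀N : a₀ ∈ N := hNsmul _ (inv_nonneg.mpr (norm_nonneg q)) q hqN
  have ha₀norm : ‖a₀‖ ≤ 1 := by
    rw [ha₀, norm_smul, Real.norm_eq_abs, abs_of_nonneg (inv_nonneg.mpr (norm_nonneg q))]
    rcases eq_or_ne q 0 with h | h
    · simp [h]
    · rw [inv_mul_cancel₀ (norm_ne_zero_iff.mpr h)]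
  have ha₀inner : ⟪g, a₀⟫ = -‖q‖ := by
    rw [ha₀, real_inner_smul_right, hgq]
    rcases eq_or_ne q 0 with h | h
    · simp [h]
    · have hn : ‖q‖ ≠ 0 := norm_ne_zero_iff.mpr h
      field_simp [hn]
  have ha₀S : a₀ ∈ S := ⟨ha₀N, ha₀norm, by rw [ha₀inner]; exact neg_nonpos.mpr (norm_nonneg q)⟩
  have ha₀smul : ⟪g, a₀⟫ • a₀ = -q := by
    rw [ha₀inner, ha₀, smul_smul]
    rcases eq_or_ne q 0 with h | h
    · simp [h]
    · have hn : ‖q‖ ≠ 0 := norm_ne_zero_iff.mpr h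
      rw [show -‖q‖ * ‖q‖⁻¹ = -1 from by rw [neg_mul, mul_inv_cancel₀ hn], neg_one_smul]
  have ha₀val : ‖g - ⟪g, a₀⟫ • a₀‖ = ‖p‖ := by
    rw [ha₀smul, sub_neg_eq_add, hgqnorm]
  have h0S : (0 : EuclideanSpace ℝ (Fin n)) ∈ S := ⟨h0N, by simp, by simp⟩
  -- bound on inner products over S
  have hboundsq : ∀ a ∈ S, ⟪g, a⟫ ^ 2 ≤ ‖q‖ ^ 2 := by
    rintro a ⟨haN, hanorm, hale⟩
    have hpa : ⟪p, a⟫ ≤ 0 := by rw [hT] at hpT; exact hpT a haN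
    have hqa : |⟪q, a⟫| ≤ ‖q‖ * ‖a‖ := abs_real_inner_le_norm q a
    have hqa' : ⟪q, a⟫ ≤ ‖q‖ := by
      have h1 : ‖q‖ * ‖a‖ ≤ ‖q‖ := by nlinarith [norm_nonneg q]
      have := abs_le.mp hqa
      linarith
    have hga : ⟪g, a⟫ = -⟪p, a⟫ - ⟪q, a⟫ := by
      have : ⟪g + q, a⟫ = ⟪-p, a⟫ := by rw [hsum]
      rw [inner_add_left, inner_neg_left] at this
      linarith
    nlinarith
  -- lower bound for form (2)
  have hbound2 : ∀ a ∈ S, ‖p‖ ≤ ‖g - ⟪g, a⟫ • a‖ := by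
    rintro a ⟨haN, hanorm, hale⟩
    have hb : (-⟪g, a⟫) • a ∈ N := hNsmul _ (neg_nonneg.mpr hale) a haN
    have e : g - ⟪g, a⟫ • a = g + (-⟪g, a⟫) • a := by rw [neg_smul]; abel
    rw [e]
    exact hkey _ hb
  -- compute the sSup
  have hsSup : sSup ((fun a => ⟪g, a⟫ ^ 2) '' S) = ‖q‖ ^ 2 := by
    apply le_antisymm
    · apply csSup_le ((Set.nonempty_of_mem h0S).image _)
      rintro x ⟨a, ha, rfl⟩
      exact hboundsq a ha
    · apply le_csSup ⟨‖q‖ ^ 2, by rintro x ⟨a, ha, rfl⟩; exact hboundsq a ha⟩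
      exact ⟨a₀, ha₀S, by dsimp only; rw [ha₀inner]; ring⟩
  -- compute the sInf of form (2)
  have hsInf2 : sInf ((fun a => ‖g - ⟪g, a⟫ • a‖) '' S) = ‖p‖ := by
    apply le_antisymm
    · apply csInf_le ⟨0, by rintro x ⟨a, ha, rfl⟩; exact norm_nonneg _⟩
      exact ⟨a₀, ha₀S, by dsimp only; rw [ha₀val]⟩
    · apply le_csInf ((Set.nonempty_of_mem h0S).image _)
      rintro x ⟨a, ha, rfl⟩
      exact hbound2 a ha
  -- form (1) equals ‖p‖
  have heq1 : Real.sqrt (‖g‖ ^ 2 - sSup ((fun a => ⟪g, a⟫ ^ 2) '' S)) = ‖p‖ := by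
    rw [hsSup, show ‖g‖ ^ 2 - ‖q‖ ^ 2 = ‖p‖ ^ 2 from by linarith, Real.sqrt_sq (norm_nonneg p)]
  -- form (4): projection onto z + T
  have hJconv : Convex ℝ ((fun w => z + w) '' T) := hTconv.translate z
  have hJmem : z + p ∈ (fun w => z + w) '' T := ⟨p, hpT, rfl⟩
  have hJmin : ∀ w ∈ (fun w => z + w) '' T, ‖(z - g) - (z + p)‖ ≤ ‖(z - g) - w‖ := by
    rintro w ⟨t, ht, rfl⟩
    rw [show (z - g) - (z + p) = -g - p from by abel, show (z - g) - (z + t) = -g - t from by abel]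
    exact hpmin t ht
  have hJeq : projJ (z - g) = z + p :=
    proj_unique hJconv (hprojJ (z - g)).1 hJmem (hprojJ (z - g)).2 hJmin
  have heq4 : ‖projJ (z - g) - z‖ = ‖p‖ := by
    rw [hJeq, show z + p - z = p from by abel]
  -- form (5)
  have heq5 : ‖-g - q‖ = ‖p‖ := by rw [← hmoreau]
  -- form (6)
  have hsInf6 : sInf ((fun a => ‖g + a‖) '' N) = ‖p‖ := by
    apply le_antisymm
    · apply csInf_le ⟨0, by rintro x ⟨a, ha, rfl⟩; exact norm_nonneg _⟩
      exact ⟨q, hqN, hgqnorm⟩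
    · apply le_csInf ((Set.nonempty_of_mem h0N).image _)
      rintro x ⟨a, ha, rfl⟩
      exact hkey a ha
  exact ⟨by rw [heq1, hsInf2], by rw [hsInf2], by rw [heq4], by rw [heq4, heq5], by
    rw [heq5, hsInf6]⟩
end
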